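/- arXiv:2002.04781 — 14 statements merged into one kernel-verified Lean document; each statement's English description precedes it below -/
import Mathlib

section
/- Let G be a group and H a normal subgroup of G such that the quotient group G/H is nontrivial and left-orderable. Then G is the union of two proper subsemigroups, i.e., there exist subsemigroups A, B of G with A ≠ G, B ≠ G, and A ∪ B = G. -/
/-- A group `Q` is left-orderable if there is a linear order on `Q` such that
`a ≤ b` implies `c * a ≤ c * b`. -/
def IsLeftOrderable (Q : Type*) [Group Q] : Prop :=
  ∃ r : LinearOrder Q, ∀ a b c : Q, r.le a b → r.le (c * a) (c * b)

/-- If `G` is a group with a normal subgroup `H` such that the quotient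
`G/H` is nontrivial and left-orderable, then `G` is the union of two proper
subsemigroups. -/
theorem union_of_two_proper_subsemigroups_of_leftOrderable_quotient {G : Type*} [Group G]
    (H : Subgroup G) [H.Normal] (hnt : Nontrivial (G ⧸ H)) (hlo : IsLeftOrderable (G ⧸ H)) :
    ∃ A B : Subsemigroup G, (A : Set G) ≠ Set.univ ∧ (B : Set G) ≠ Set.univ ∧
      (A : Set G) ∪ (B : Set G) = Set.univ := by
  obtain ⟨r, hr⟩ := hlo
  set π : G →* G ⧸ H := QuotientGroup.mk' H
  refine ⟨⟨{g | r.le 1 (π g)}, ?_⟩, ⟨{g | r.le (π g) 1}, ?_⟩, ?_, ?_, ?_⟩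
  · intro a b ha hb
    simp only [Set.mem_setOf_eq, map_mul] at *
    exact r.le_trans _ _ _ ha (by simpa using hr 1 (π b) (π a) hb)
  · intro a b ha hb
    simp only [Set.mem_setOf_eq, map_mul] at *
    exact r.le_trans _ _ _ (by simpa using hr (π b) 1 (π a) hb) ha
  · -- A proper: need g with ¬ 1 ≤ π g
    obtain ⟨q, hq⟩ := exists_ne (1 : G ⧸ H)
    obtain ⟨g, rfl⟩ := QuotientGroup.mk'_surjective H q
    intro h
    rcases r.le_total 1 (π g) with h1 | h1
    · have h2 : r.le (π g⁻¹) 1 := by simpa using hr 1 (π g) (π g)⁻¹ h1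
      have : r.le 1 (π g⁻¹) := by
        have := Set.eq_univ_iff_forall.mp h g⁻¹
        simpa using this
      have : (π g)⁻¹ = 1 := by simpa using r.le_antisymm _ _ h2 this
      exact hq (by rw [← inv_inv (π g), this, inv_one])
    · by_cases h1' : r.le 1 (π g)
      · exact hq (r.le_antisymm _ _ h1 h1')
      · have := Set.eq_univ_iff_forall.mp h g
        exact h1' this
  · obtain ⟨q, hq⟩ := exists_ne (1 : G ⧸ H)
    obtain ⟨g, rfl⟩ := QuotientGroup.mk'_surjective H q
    intro h
    rcases r.le_total (π g) 1 with h1 | h1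
    · have h2 : r.le 1 (π g⁻¹) := by simpa using hr (π g) 1 (π g)⁻¹ h1
      have h3 : r.le (π g⁻¹) 1 := by
        have := Set.eq_univ_iff_forall.mp h g⁻¹
        simpa using this
      have : (π g)⁻¹ = 1 := by simpa using r.le_antisymm _ _ h3 h2
      exact hq (by rw [← inv_inv (π g), this, inv_one])
    · by_cases h1' : r.le (π g) 1
      · exact hq (r.le_antisymm _ _ h1' h1)
      · exact h1' (Set.eq_univ_iff_forall.mp h g)
  · ext g
    simp only [Set.mem_union, Set.mem_setOf_eq, Set.mem_univ, iff_true]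
    exact (r.le_total 1 (π g)).imp id id
end

section
/- Let G be a group that is the union of two proper subsemigroups. Then there exists a normal subgroup N of G such that the quotient group G/N is nontrivial and left-orderable. -/
section Aux

variable {G : Type*} [Group G]

/-- `g` and `h` are equivalent for the preorder with positive cone `P`. -/
def srel (P : Set G) (g h : G) : Prop := g⁻¹ * h ∈ P ∧ h⁻¹ * g ∈ P

/-- `g` is strictly below `h` for the preorder with positive cone `P`. -/
def cLT (P : Set G) (g h : G) : Prop := g⁻¹ * h ∈ P ∧ h⁻¹ * g ∉ P

/-- Lexicographic comparison of the left-translation actions of `g` and `h`,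
with respect to an auxiliary well-order on `G`. -/
def LL (P : Set G) (g h : G) : Prop :=
  ∃ x₀ : G, (∀ x : G, WellOrderingRel x x₀ → srel P (g * x) (h * x)) ∧
    cLT P (g * x₀) (h * x₀)

variable {P : Set G} (hmul : ∀ {x y : G}, x ∈ P → y ∈ P → x * y ∈ P)

theorem srel_symm {g h : G} (hgh : srel P g h) : srel P h g := ⟨hgh.2, hgh.1⟩

include hmul

theorem srel_trans {g h k : G} (h₁ : srel P g h) (h₂ : srel P h k) : srel P g k := by
  constructor
  · have := hmul h₁.1 h₂.1
    rwa [show g⁻¹ * h * (h⁻¹ * k) = g⁻¹ * k by group] at this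
  · have := hmul h₂.2 h₁.2
    rwa [show k⁻¹ * h * (h⁻¹ * g) = k⁻¹ * g by group] at this

theorem cLT_congr_left {a a' b : G} (ha : srel P a a') : cLT P a b ↔ cLT P a' b := by
  constructor
  · rintro ⟨h1, h2⟩
    refine ⟨?_, fun hc => h2 ?_⟩
    · have := hmul ha.2 h1
      rwa [show a'⁻¹ * a * (a⁻¹ * b) = a'⁻¹ * b by group] at this
    · have := hmul hc ha.2
      rwa [show b⁻¹ * a' * (a'⁻¹ * a) = b⁻¹ * a by group] at this
  · rintro ⟨h1, h2⟩
    refine ⟨?_, fun hc => h2 ?_⟩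
    · have := hmul ha.1 h1
      rwa [show a⁻¹ * a' * (a'⁻¹ * b) = a⁻¹ * b by group] at this
    · have := hmul hc ha.1
      rwa [show b⁻¹ * a * (a⁻¹ * a') = b⁻¹ * a' by group] at this

theorem cLT_congr_right {a b b' : G} (hb : srel P b b') : cLT P a b ↔ cLT P a b' := by
  constructor
  · rintro ⟨h1, h2⟩
    refine ⟨?_, fun hc => h2 ?_⟩
    · have := hmul h1 hb.1
      rwa [show a⁻¹ * b * (b⁻¹ * b') = a⁻¹ * b' by group] at this
    · have := hmul hb.1 hc
      rwa [show b⁻¹ * b' * (b'⁻¹ * a) = b⁻¹ * a by group] at this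
  · rintro ⟨h1, h2⟩
    refine ⟨?_, fun hc => h2 ?_⟩
    · have := hmul h1 hb.2
      rwa [show a⁻¹ * b' * (b'⁻¹ * b) = a⁻¹ * b by group] at this
    · have := hmul hb.2 hc
      rwa [show b'⁻¹ * b * (b⁻¹ * a) = b'⁻¹ * a by group] at this

theorem cLT_trans {a b c : G} (h₁ : cLT P a b) (h₂ : cLT P b c) : cLT P a c := by
  refine ⟨?_, fun hc => h₂.2 ?_⟩
  · have := hmul h₁.1 h₂.1
    rwa [show a⁻¹ * b * (b⁻¹ * c) = a⁻¹ * c by group] at this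
  · have := hmul hc h₁.1
    rwa [show c⁻¹ * a * (a⁻¹ * b) = c⁻¹ * b by group] at this

omit hmul in
theorem cLT_total (htot : ∀ g : G, g ∈ P ∨ g⁻¹ ∈ P) {a b : G} (hne : ¬ srel P a b) :
    cLT P a b ∨ cLT P b a := by
  rcases htot (a⁻¹ * b) with h | h
  · exact Or.inl ⟨h, fun hc => hne ⟨h, hc⟩⟩
  · rw [show (a⁻¹ * b)⁻¹ = b⁻¹ * a by group] at h
    exact Or.inr ⟨h, fun hc => hne ⟨hc, h⟩⟩

theorem LL_congr {g g' h h' : G} (hg : ∀ x : G, srel P (g * x) (g' * x))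
    (hh : ∀ x : G, srel P (h * x) (h' * x)) (hL : LL P g h) : LL P g' h' := by
  obtain ⟨x₀, hbelow, hat⟩ := hL
  refine ⟨x₀, fun x hx => ?_, ?_⟩
  · exact srel_trans hmul (srel_trans hmul (srel_symm (hg x)) (hbelow x hx)) (hh x)
  · rw [← cLT_congr_left hmul (hg x₀), ← cLT_congr_right hmul (hh x₀)]
    exact hat

theorem LL_trans {g h k : G} (h₁ : LL P g h) (h₂ : LL P h k) : LL P g k := by
  obtain ⟨x₁, hb₁, hc₁⟩ := h₁
  obtain ⟨x₂, hb₂, hc₂⟩ := h₂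
  rcases @trichotomous G WellOrderingRel _ x₁ x₂ with hlt | heq | hgt
  · refine ⟨x₁, fun x hx => srel_trans hmul (hb₁ x hx)
      (hb₂ x (IsTrans.trans x x₁ x₂ hx hlt)), ?_⟩
    rw [cLT_congr_right hmul (hb₂ x₁ hlt)] at hc₁
    exact hc₁
  · subst heq
    exact ⟨x₁, fun x hx => srel_trans hmul (hb₁ x hx) (hb₂ x hx),
      cLT_trans hmul hc₁ hc₂⟩
  · refine ⟨x₂, fun x hx => srel_trans hmul (hb₁ x (IsTrans.trans x x₂ x₁ hx hgt))
      (hb₂ x hx), ?_⟩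
    rw [← cLT_congr_left hmul (hb₁ x₂ hgt)] at hc₂
    exact hc₂

omit hmul in
theorem LL_mul_left {g h : G} (c : G) (hL : LL P g h) : LL P (c * g) (c * h) := by
  obtain ⟨x₀, hbelow, hat⟩ := hL
  refine ⟨x₀, fun x hx => ?_, ?_⟩
  · have := hbelow x hx
    refine ⟨?_, ?_⟩
    · have h1 := this.1
      rwa [show (g * x)⁻¹ * (h * x) = (c * g * x)⁻¹ * (c * h * x) by group] at h1
    · have h2 := this.2
      rwa [show (h * x)⁻¹ * (g * x) = (c * h * x)⁻¹ * (c * g * x) by group] at h2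
  · refine ⟨?_, fun hc => hat.2 ?_⟩
    · have h1 := hat.1
      rwa [show (g * x₀)⁻¹ * (h * x₀) = (c * g * x₀)⁻¹ * (c * h * x₀) by group] at h1
    · rwa [show (c * h * x₀)⁻¹ * (c * g * x₀) = (h * x₀)⁻¹ * (g * x₀) by group] at hc

end Aux

/-- The key construction: from a "total" subsemigroup `P` (as a set, with a witness of
properness) we produce the desired normal subgroup. -/
theorem key_construction {G : Type*} [Group G] (P : Set G)
    (hmul : ∀ {x y : G}, x ∈ P → y ∈ P → x * y ∈ P)
    (htot : ∀ g : G, g ∈ P ∨ g⁻¹ ∈ P) (g₀ : G) (hg₀ : g₀ ∉ P) :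
    ∃ (N : Subgroup G) (hN : N.Normal), Nontrivial (G ⧸ N) ∧
      @IsLeftOrderable (G ⧸ N) (@QuotientGroup.Quotient.group G _ N hN) := by
  classical
  have h1 : (1 : G) ∈ P := by
    rcases htot 1 with h | h
    · exact h
    · simpa using h
  -- the kernel of the action on the order space
  set K : Subgroup G :=
    { carrier := {g : G | ∀ x : G, x⁻¹ * g * x ∈ P ∧ x⁻¹ * g⁻¹ * x ∈ P}
      one_mem' := fun x => by simpa using h1
      mul_mem' := by
        intro a b ha hb x
        constructor
        · have := hmul (ha x).1 (hb x).1
          rwa [show x⁻¹ * a * x * (x⁻¹ * b * x) = x⁻¹ * (a * b) * x by group] at this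
        · have := hmul (hb x).2 (ha x).2
          rwa [show x⁻¹ * b⁻¹ * x * (x⁻¹ * a⁻¹ * x) = x⁻¹ * (a * b)⁻¹ * x by group] at this
      inv_mem' := by
        intro a ha x
        refine ⟨(ha x).2, ?_⟩
        have := (ha x).1
        rwa [show x⁻¹ * a * x = x⁻¹ * a⁻¹⁻¹ * x by group] at this } with hKdef
  have hKmem : ∀ g : G, g ∈ K ↔ ∀ x : G, x⁻¹ * g * x ∈ P ∧ x⁻¹ * g⁻¹ * x ∈ P := fun g => Iff.rfl
  have hKnormal : K.Normal := by
    constructor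
    intro n hn g
    rw [hKmem] at hn ⊢
    intro y
    constructor
    · have := (hn (g⁻¹ * y)).1
      rwa [show (g⁻¹ * y)⁻¹ * n * (g⁻¹ * y) = y⁻¹ * (g * n * g⁻¹) * y by group] at this
    · have := (hn (g⁻¹ * y)).2
      rwa [show (g⁻¹ * y)⁻¹ * n⁻¹ * (g⁻¹ * y) = y⁻¹ * (g * n * g⁻¹)⁻¹ * y by group] at this
  haveI := hKnormal
  -- coset equality in terms of `srel`
  have hmk : ∀ g h : G, (QuotientGroup.mk g : G ⧸ K) = QuotientGroup.mk h ↔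
      ∀ x : G, srel P (g * x) (h * x) := by
    intro g h
    rw [QuotientGroup.eq]
    constructor
    · intro hk x
      rw [hKmem] at hk
      refine ⟨?_, ?_⟩
      · have := (hk x).1
        rwa [show x⁻¹ * (g⁻¹ * h) * x = (g * x)⁻¹ * (h * x) by group] at this
      · have := (hk x).2
        rwa [show x⁻¹ * (g⁻¹ * h)⁻¹ * x = (h * x)⁻¹ * (g * x) by group] at this
    · intro hs
      rw [hKmem]
      intro x
      refine ⟨?_, ?_⟩
      · have := (hs x).1
        rwa [show (g * x)⁻¹ * (h * x) = x⁻¹ * (g⁻¹ * h) * x by group] at this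
      · have := (hs x).2
        rwa [show (h * x)⁻¹ * (g * x) = x⁻¹ * (g⁻¹ * h)⁻¹ * x by group] at this
  have hg₀K : g₀ ∉ K := by
    intro hg
    rw [hKmem] at hg
    have := (hg 1).1
    simp only [inv_one, one_mul, mul_one] at this
    exact hg₀ this
  have hnontriv : Nontrivial (G ⧸ K) := by
    refine ⟨QuotientGroup.mk g₀, 1, fun hc => hg₀K ?_⟩
    rwa [QuotientGroup.eq_one_iff] at hc
  refine ⟨K, hKnormal, hnontriv, ?_⟩
  -- the strict total order on the quotient
  set rlt : (G ⧸ K) → (G ⧸ K) → Prop := fun q₁ q₂ =>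
    ∃ g h : G, q₁ = QuotientGroup.mk g ∧ q₂ = QuotientGroup.mk h ∧ LL P g h with hrlt
  -- `LL` respects cosets
  have hLLcongr : ∀ {g g' h h' : G}, (QuotientGroup.mk g : G ⧸ K) = QuotientGroup.mk g' →
      (QuotientGroup.mk h : G ⧸ K) = QuotientGroup.mk h' → LL P g h → LL P g' h' := by
    intro g g' h h' hgg hhh hL
    exact LL_congr hmul (fun x => (hmk g g').mp hgg x) (fun x => (hmk h h').mp hhh x) hL
  have hrlt_mk : ∀ g h : G, rlt (QuotientGroup.mk g) (QuotientGroup.mk h) ↔ LL P g h := by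
    intro g h
    constructor
    · rintro ⟨g', h', hg', hh', hL⟩
      exact hLLcongr hg'.symm hh'.symm hL
    · intro hL
      exact ⟨g, h, rfl, rfl, hL⟩
  have hirrefl : ∀ q : G ⧸ K, ¬ rlt q q := by
    rintro q ⟨g, h, hg, hh, x₀, _, hat⟩
    have : (QuotientGroup.mk g : G ⧸ K) = QuotientGroup.mk h := by rw [← hg, ← hh]
    exact hat.2 ((hmk g h).mp this x₀).2
  have htrans : ∀ a b c : G ⧸ K, rlt a b → rlt b c → rlt a c := by
    rintro a b c ⟨g, h, hg, hh, hL₁⟩ ⟨h', k, hh', hk, hL₂⟩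
    have : LL P h k := hLLcongr (hh ▸ hh' ▸ rfl : (QuotientGroup.mk h' : G ⧸ K) = _) rfl hL₂
    exact ⟨g, k, hg, hk, LL_trans hmul hL₁ this⟩
  have htrich : ∀ a b : G ⧸ K, rlt a b ∨ a = b ∨ rlt b a := by
    intro a b
    obtain ⟨g, rfl⟩ := QuotientGroup.mk_surjective a
    obtain ⟨h, rfl⟩ := QuotientGroup.mk_surjective b
    by_cases heq : (QuotientGroup.mk g : G ⧸ K) = QuotientGroup.mk h
    · exact Or.inr (Or.inl heq)
    · have hD : {x : G | ¬ srel P (g * x) (h * x)}.Nonempty := by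
        by_contra hempty
        rw [Set.not_nonempty_iff_eq_empty] at hempty
        refine heq ((hmk g h).mpr fun x => ?_)
        by_contra hx
        exact absurd (Set.eq_empty_iff_forall_notMem.mp hempty x) (by simpa using hx)
      have hwf : WellFounded (WellOrderingRel : G → G → Prop) := IsWellFounded.wf
      set x₀ := hwf.min _ hD with hx₀
      have hx₀mem : ¬ srel P (g * x₀) (h * x₀) := hwf.min_mem _ hD
      have hbelow : ∀ x : G, WellOrderingRel x x₀ → srel P (g * x) (h * x) := by
        intro x hx
        by_contra hc
        exact hwf.not_lt_min _ hc hx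
      rcases cLT_total htot hx₀mem with hlt | hlt
      · exact Or.inl ((hrlt_mk g h).mpr ⟨x₀, hbelow, hlt⟩)
      · exact Or.inr (Or.inr ((hrlt_mk h g).mpr
          ⟨x₀, fun x hx => srel_symm (hbelow x hx), hlt⟩))
  have hmulinv : ∀ (c a b : G ⧸ K), rlt a b → rlt (c * a) (c * b) := by
    intro c a b hab
    obtain ⟨c₀, rfl⟩ := QuotientGroup.mk_surjective c
    obtain ⟨g, h, hg, hh, hL⟩ := hab
    refine ⟨c₀ * g, c₀ * h, ?_, ?_, LL_mul_left c₀ hL⟩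
    · rw [hg, QuotientGroup.mk_mul]
    · rw [hh, QuotientGroup.mk_mul]
  haveI hSTO : IsStrictTotalOrder (G ⧸ K) rlt :=
    { trichotomous := fun a b hab hba => ((htrich a b).resolve_left hab).resolve_right hba
      irrefl := hirrefl
      trans := htrans }
  haveI hdec : DecidableRel rlt := fun a b => Classical.dec _
  refine ⟨linearOrderOfSTO rlt, ?_⟩
  intro a b c hab
  rcases (hab : a = b ∨ rlt a b) with rfl | hab
  · exact Or.inl rfl
  · exact Or.inr (hmulinv c a b hab)

/-- If a group `G` is the union of two proper subsemigroups, then there is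
a normal subgroup `N` of `G` such that `G/N` is nontrivial and left-orderable. -/
theorem leftOrderable_quotient_of_union_of_two_proper_subsemigroups {G : Type*} [Group G]
    (A B : Subsemigroup G) (hA : (A : Set G) ≠ Set.univ) (hB : (B : Set G) ≠ Set.univ)
    (hunion : (A : Set G) ∪ (B : Set G) = Set.univ) :
    ∃ (N : Subgroup G) (hN : N.Normal), Nontrivial (G ⧸ N) ∧
      @IsLeftOrderable (G ⧸ N) (@QuotientGroup.Quotient.group G _ N hN) := by
  have hcover : ∀ g : G, g ∈ A ∨ g ∈ B := by
    intro g
    have : g ∈ (A : Set G) ∪ (B : Set G) := hunion ▸ Set.mem_univ g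
    simpa using this
  by_cases hc : ∀ g : G, g ∈ A ∨ g⁻¹ ∈ A
  · obtain ⟨a, ha⟩ := (Set.ne_univ_iff_exists_notMem _).mp hA
    exact key_construction (A : Set G) (fun hx hy => A.mul_mem hx hy) hc a ha
  · push_neg at hc
    obtain ⟨x, hx1, hx2⟩ := hc
    have hxB : x ∈ B := (hcover x).resolve_left hx1
    have hxiB : x⁻¹ ∈ B := (hcover x⁻¹).resolve_left hx2
    obtain ⟨b, hb⟩ := (Set.ne_univ_iff_exists_notMem _).mp hB
    refine key_construction (B : Set G) (fun hx hy => B.mul_mem hx hy) ?_ b hb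
    intro g
    by_contra hg
    push_neg at hg
    have hgA : g ∈ A := (hcover g).resolve_right hg.1
    have hgiA : g⁻¹ ∈ A := (hcover g⁻¹).resolve_right hg.2
    rcases hcover (x * g) with hxg | hxg
    · have : x ∈ A := by
        have := A.mul_mem hxg hgiA
        rwa [show x * g * g⁻¹ = x by group] at this
      exact hx1 this
    · have : g ∈ B := by
        have := B.mul_mem hxiB hxg
        rwa [show x⁻¹ * (x * g) = g by group] at this
      exact hg.1 this
end

section
/- A group G is the union of two proper subsemigroups if and only if G has a nontrivial left-orderable quotient, i.e., there exist proper subsemigroups A, B of G with A ∪ B = G if and only if there exists a normal subgroup N of G such that G/N is nontrivial and left-orderable. -/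
/-- Auxiliary: if a group `Q` admits a faithful action by order-preserving maps on a
linearly ordered set, then `Q` is left-orderable (via a lexicographic order along a
well-ordering of the set). -/
theorem isLeftOrderable_of_action {Q Ω : Type*} [Group Q] (le : Ω → Ω → Prop)
    (htrans : ∀ {x y z}, le x y → le y z → le x z)
    (hanti : ∀ {x y}, le x y → le y x → x = y)
    (htotal : ∀ x y, le x y ∨ le y x)
    (f : Q → Ω → Ω)
    (hinj : Function.Injective f)
    (hmul : ∀ q q' ω, f (q * q') ω = f q (f q' ω))
    (hone : ∀ ω, f 1 ω = ω)
    (hmono : ∀ (q : Q) {x y}, le x y → le (f q x) (f q y)) :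
    IsLeftOrderable Q := by
  classical
  have finj : ∀ q : Q, Function.Injective (f q) := by
    intro q x y hxy
    have h1 : f q⁻¹ (f q x) = f q⁻¹ (f q y) := congrArg _ hxy
    rwa [← hmul, ← hmul, inv_mul_cancel, hone, hone] at h1
  let R : Ω → Ω → Prop := WellOrderingRel
  have Rwf : WellFounded R := (WellOrderingRel.isWellOrder).toIsWellFounded.wf
  have Rtri : ∀ a b : Ω, R a b ∨ a = b ∨ R b a := fun a b => trichotomous a b
  have Rtrans : ∀ {a b c : Ω}, R a b → R b c → R a c :=
    fun h h' => IsTrans.trans _ _ _ h h'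
  -- strict lexicographic relation
  let lt : Q → Q → Prop := fun a b =>
    ∃ i, (∀ j, R j i → f a j = f b j) ∧ le (f a i) (f b i) ∧ f a i ≠ f b i
  have lt_irrefl : ∀ a, ¬ lt a a := by
    rintro a ⟨i, -, -, hne⟩; exact hne rfl
  have lt_trans : ∀ {a b c}, lt a b → lt b c → lt a c := by
    rintro a b c ⟨i, hpre, hle, hne⟩ ⟨i', hpre', hle', hne'⟩
    rcases Rtri i i' with h | rfl | h
    · refine ⟨i, fun j hj => (hpre j hj).trans (hpre' j (Rtrans hj h)), ?_, ?_⟩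
      · rw [← hpre' i h]; exact hle
      · rw [← hpre' i h]; exact hne
    · refine ⟨i, fun j hj => (hpre j hj).trans (hpre' j hj), htrans hle hle', ?_⟩
      intro hac
      exact hne (hanti hle (hac ▸ hle'))
    · refine ⟨i', fun j hj => (hpre j (Rtrans hj h)).trans (hpre' j hj), ?_, ?_⟩
      · rw [hpre i' h]; exact hle'
      · rw [hpre i' h]; exact hne'
  have lt_asymm : ∀ {a b}, lt a b → lt b a → False := by
    rintro a b ⟨i, hpre, hle, hne⟩ ⟨i', hpre', hle', hne'⟩
    rcases Rtri i i' with h | rfl | h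
    · exact hne (hpre' i h).symm
    · exact hne (hanti hle hle')
    · exact hne' (hpre i' h).symm
  have lt_trich : ∀ a b, a ≠ b → lt a b ∨ lt b a := by
    intro a b hab
    have hfab : f a ≠ f b := fun h => hab (hinj h)
    have hD : ∃ ω, f a ω ≠ f b ω := Function.ne_iff.mp hfab
    set D := {ω | f a ω ≠ f b ω} with hDdef
    have hDne : D.Nonempty := hD
    let i := Rwf.min D hDne
    have hi : f a i ≠ f b i := Rwf.min_mem D hDne
    have hpre : ∀ j, R j i → f a j = f b j := by
      intro j hj
      by_contra hjne
      exact Rwf.not_lt_min D hjne hj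
    rcases htotal (f a i) (f b i) with h | h
    · exact Or.inl ⟨i, hpre, h, hi⟩
    · exact Or.inr ⟨i, fun j hj => (hpre j hj).symm, h, fun e => hi e.symm⟩
  have lt_mul : ∀ (c : Q) {a b}, lt a b → lt (c * a) (c * b) := by
    rintro c a b ⟨i, hpre, hle, hne⟩
    refine ⟨i, fun j hj => ?_, ?_, ?_⟩
    · rw [hmul, hmul, hpre j hj]
    · rw [hmul, hmul]; exact hmono c hle
    · rw [hmul, hmul]; exact fun h => hne (finj c h)
  refine ⟨{ le := fun a b => a = b ∨ lt a b
            lt := fun a b => lt a b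
            le_refl := fun a => Or.inl rfl
            le_trans := ?_
            lt_iff_le_not_ge := ?_
            le_antisymm := ?_
            le_total := ?_
            toDecidableLE := fun a b => Classical.dec _ }, ?_⟩
  · rintro a b c (rfl | hab) h
    · exact h
    · rcases h with rfl | hbc
      · exact Or.inr hab
      · exact Or.inr (lt_trans hab hbc)
  · intro a b
    constructor
    · intro h
      refine ⟨Or.inr h, ?_⟩
      rintro (rfl | h')
      · exact lt_irrefl _ h
      · exact lt_asymm h h'
    · rintro ⟨(rfl | h), hn⟩
      · exact absurd (Or.inl rfl) hn
      · exact h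
  · rintro a b (rfl | hab) h
    · rfl
    · rcases h with rfl | hba
      · rfl
      · exact absurd hba (fun h' => lt_asymm hab h')
  · intro a b
    by_cases hab : a = b
    · exact Or.inl (Or.inl hab)
    · rcases lt_trich a b hab with h | h
      · exact Or.inl (Or.inr h)
      · exact Or.inr (Or.inr h)
  · rintro a b c (rfl | hab)
    · exact Or.inl rfl
    · exact Or.inr (lt_mul c hab)

/-- **Main Theorem.** A group `G` is the union of two proper subsemigroups
if and only if `G` has a nontrivial left-orderable quotient. -/
theorem union_of_two_proper_subsemigroups_iff_leftOrderable_quotient {G : Type*} [Group G] :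
    (∃ A B : Subsemigroup G, (A : Set G) ≠ Set.univ ∧ (B : Set G) ≠ Set.univ ∧
        (A : Set G) ∪ (B : Set G) = Set.univ) ↔
      (∃ (N : Subgroup G) (hN : N.Normal), Nontrivial (G ⧸ N) ∧
        @IsLeftOrderable (G ⧸ N) (@QuotientGroup.Quotient.group G _ N hN)) := by
  constructor
  · rintro ⟨A, B, hA, hB, hAB⟩
    classical
    have hcov : ∀ g : G, g ∈ A ∨ g ∈ B := by
      intro g
      have : g ∈ (A : Set G) ∪ (B : Set G) := by rw [hAB]; trivial
      exact this
    obtain ⟨P, hPproper, hPcov⟩ :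
        ∃ P : Subsemigroup G, (P : Set G) ≠ Set.univ ∧ ∀ g : G, g ∈ P ∨ g⁻¹ ∈ P := by
      by_cases hAc : ∀ g : G, g ∈ A ∨ g⁻¹ ∈ A
      · exact ⟨A, hA, hAc⟩
      · push_neg at hAc
        obtain ⟨x, hx, hx'⟩ := hAc
        refine ⟨B, hB, fun g => ?_⟩
        by_contra hg
        push_neg at hg
        obtain ⟨hg1, hg2⟩ := hg
        have hxB' : x⁻¹ ∈ B := (hcov x⁻¹).resolve_left hx'
        have hyA' : g⁻¹ ∈ A := (hcov g⁻¹).resolve_right hg2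
        rcases hcov (x * g) with h | h
        · have : (x * g) * g⁻¹ ∈ A := A.mul_mem h hyA'
          rw [mul_inv_cancel_right] at this
          exact hx this
        · have : x⁻¹ * (x * g) ∈ B := B.mul_mem hxB' h
          rw [inv_mul_cancel_left] at this
          exact hg1 this
    have h1P : (1 : G) ∈ P := by
      rcases hPcov 1 with h | h
      · exact h
      · rwa [inv_one] at h
    let N : Subgroup G :=
      { carrier := {g : G | g ∈ P ∧ g⁻¹ ∈ P}
        one_mem' := ⟨h1P, by rwa [inv_one]⟩
        mul_mem' := fun {a b} ha hb =>
          ⟨P.mul_mem ha.1 hb.1, by rw [mul_inv_rev]; exact P.mul_mem hb.2 ha.2⟩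
        inv_mem' := fun {a} ha => ⟨ha.2, by rw [inv_inv]; exact ha.1⟩ }
    have hmemN : ∀ g : G, g ∈ N ↔ g ∈ P ∧ g⁻¹ ∈ P := fun g => Iff.rfl
    obtain ⟨g₀, hg₀⟩ : ∃ g : G, g ∉ P := by
      by_contra h
      push_neg at h
      exact hPproper (Set.eq_univ_of_forall h)
    let K : Subgroup G := N.normalCore
    have hmemK : ∀ g : G, g ∈ K ↔ ∀ b : G, b * g * b⁻¹ ∈ N := fun g => Iff.rfl
    haveI hKn : K.Normal := Subgroup.normalCore_normal N
    -- the linear order data on Ω = G ⧸ N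
    let Lle : (G ⧸ N) → (G ⧸ N) → Prop := fun ω₁ ω₂ =>
      Quotient.liftOn₂' ω₁ ω₂ (fun g h => g⁻¹ * h ∈ P) (by
        intro a₁ a₂ b₁ b₂ h₁ h₂
        have hn : a₁⁻¹ * b₁ ∈ N := QuotientGroup.leftRel_apply.mp h₁
        have hm : a₂⁻¹ * b₂ ∈ N := QuotientGroup.leftRel_apply.mp h₂
        have hn2 : (a₁⁻¹ * b₁)⁻¹ ∈ P := ((hmemN _).mp hn).2
        have hn1 : a₁⁻¹ * b₁ ∈ P := ((hmemN _).mp hn).1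
        have hm1 : a₂⁻¹ * b₂ ∈ P := ((hmemN _).mp hm).1
        have hm2 : (a₂⁻¹ * b₂)⁻¹ ∈ P := ((hmemN _).mp hm).2
        have e1 : b₁⁻¹ * b₂ = (a₁⁻¹ * b₁)⁻¹ * (a₁⁻¹ * a₂) * (a₂⁻¹ * b₂) := by group
        have e2 : a₁⁻¹ * a₂ = (a₁⁻¹ * b₁) * (b₁⁻¹ * b₂) * (a₂⁻¹ * b₂)⁻¹ := by group
        simp only [eq_iff_iff]
        constructor
        · intro h
          rw [e1]
          exact P.mul_mem (P.mul_mem hn2 h) hm1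
        · intro h
          rw [e2]
          exact P.mul_mem (P.mul_mem hn1 h) hm2)
    have hLle_mk : ∀ g h : G,
        Lle (QuotientGroup.mk g) (QuotientGroup.mk h) ↔ g⁻¹ * h ∈ P := fun g h => Iff.rfl
    -- the action of G ⧸ K on G ⧸ N
    have hact : ∀ (k a b : G), (QuotientGroup.leftRel N).r a b → (QuotientGroup.leftRel N).r (k * a) (k * b) := by
      intro k a b hab
      have h1 : a⁻¹ * b ∈ N := QuotientGroup.leftRel_apply.mp hab
      apply QuotientGroup.leftRel_apply.mpr
      have e : (k * a)⁻¹ * (k * b) = a⁻¹ * b := by group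
      rwa [e]
    let fmap : G → (G ⧸ N) → (G ⧸ N) := fun k =>
      Quotient.map' (fun g => k * g) (fun a b hab => hact k a b hab)
    let f : (G ⧸ K) → (G ⧸ N) → (G ⧸ N) := fun q => Quotient.liftOn' q fmap (by
      intro k k' hkk'
      have hk : k⁻¹ * k' ∈ K := QuotientGroup.leftRel_apply.mp hkk'
      funext ω
      induction ω using Quotient.inductionOn' with
      | h g =>
        show QuotientGroup.mk (k * g) = QuotientGroup.mk (k' * g)
        rw [QuotientGroup.eq]
        have h1 : g⁻¹ * (k⁻¹ * k') * g⁻¹⁻¹ ∈ N := (hmemK _).mp hk g⁻¹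
        have e : (k * g)⁻¹ * (k' * g) = g⁻¹ * (k⁻¹ * k') * g⁻¹⁻¹ := by group
        rwa [e])
    have hf_mk : ∀ (k g : G),
        f (QuotientGroup.mk k) (QuotientGroup.mk g) = QuotientGroup.mk (k * g) :=
      fun k g => rfl
    have hinjf : Function.Injective f := by
      intro q q' h
      induction q using Quotient.inductionOn' with
      | h k =>
      induction q' using Quotient.inductionOn' with
      | h k' =>
        have hg : ∀ g : G, (k * g)⁻¹ * (k' * g) ∈ N := by
          intro g
          have h2 := congrFun h (QuotientGroup.mk g)
          exact QuotientGroup.eq.mp h2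
        have hkk : k⁻¹ * k' ∈ K := by
          apply (hmemK _).mpr
          intro b
          have h3 := hg b⁻¹
          have e : (k * b⁻¹)⁻¹ * (k' * b⁻¹) = b * (k⁻¹ * k') * b⁻¹ := by group
          rwa [e] at h3
        exact Quotient.sound' (QuotientGroup.leftRel_apply.mpr hkk)
    have hmulf : ∀ (q q' : G ⧸ K) (ω : G ⧸ N), f (q * q') ω = f q (f q' ω) := by
      intro q q' ω
      induction q using Quotient.inductionOn' with
      | h k =>
      induction q' using Quotient.inductionOn' with
      | h k' =>
      induction ω using Quotient.inductionOn' with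
      | h g =>
        show QuotientGroup.mk ((k * k') * g) = QuotientGroup.mk (k * (k' * g))
        rw [mul_assoc]
    have honef : ∀ ω : G ⧸ N, f 1 ω = ω := by
      intro ω
      induction ω using Quotient.inductionOn' with
      | h g =>
        show QuotientGroup.mk (1 * g) = QuotientGroup.mk g
        rw [one_mul]
    have hmonof : ∀ (q : G ⧸ K) {x y : G ⧸ N}, Lle x y → Lle (f q x) (f q y) := by
      intro q x y
      induction q using Quotient.inductionOn' with
      | h k =>
      induction x using Quotient.inductionOn' with
      | h g =>
      induction y using Quotient.inductionOn' with
      | h g' =>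
        intro hxy
        have hp : g⁻¹ * g' ∈ P := hxy
        show (k * g)⁻¹ * (k * g') ∈ P
        have e : (k * g)⁻¹ * (k * g') = g⁻¹ * g' := by group
        rwa [e]
    have htransL : ∀ {x y z : G ⧸ N}, Lle x y → Lle y z → Lle x z := by
      intro x y z
      induction x using Quotient.inductionOn' with
      | h g₁ =>
      induction y using Quotient.inductionOn' with
      | h g₂ =>
      induction z using Quotient.inductionOn' with
      | h g₃ =>
        intro h1 h2
        show g₁⁻¹ * g₃ ∈ P
        have e : g₁⁻¹ * g₃ = (g₁⁻¹ * g₂) * (g₂⁻¹ * g₃) := by group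
        rw [e]
        exact P.mul_mem h1 h2
    have hantiL : ∀ {x y : G ⧸ N}, Lle x y → Lle y x → x = y := by
      intro x y
      induction x using Quotient.inductionOn' with
      | h g₁ =>
      induction y using Quotient.inductionOn' with
      | h g₂ =>
        intro h1 h2
        have hp1 : g₁⁻¹ * g₂ ∈ P := h1
        have hp2 : g₂⁻¹ * g₁ ∈ P := h2
        have hp2' : (g₁⁻¹ * g₂)⁻¹ ∈ P := by
          have e : (g₁⁻¹ * g₂)⁻¹ = g₂⁻¹ * g₁ := by group
          rw [e]; exact hp2
        exact Quotient.sound' (QuotientGroup.leftRel_apply.mpr ((hmemN _).mpr ⟨hp1, hp2'⟩))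
    have htotalL : ∀ x y : G ⧸ N, Lle x y ∨ Lle y x := by
      intro x y
      induction x using Quotient.inductionOn' with
      | h g₁ =>
      induction y using Quotient.inductionOn' with
      | h g₂ =>
        rcases hPcov (g₁⁻¹ * g₂) with h | h
        · exact Or.inl h
        · right
          show g₂⁻¹ * g₁ ∈ P
          have e : g₂⁻¹ * g₁ = (g₁⁻¹ * g₂)⁻¹ := by group
          rwa [e]
    refine ⟨K, hKn, ⟨⟨QuotientGroup.mk g₀, 1, ?_⟩⟩, ?_⟩
    · intro h
      have hK : g₀ ∈ K := (QuotientGroup.eq_one_iff g₀).mp h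
      exact hg₀ (((hmemN _).mp (N.normalCore_le hK)).1)
    · exact isLeftOrderable_of_action Lle htransL hantiL htotalL f hinjf hmulf honef hmonof
  · rintro ⟨N, hN, hnt, r, hr⟩
    haveI := hN
    have key : ∃ q : G ⧸ N, q ≠ 1 ∧ r.le 1 q := by
      obtain ⟨q, hq⟩ := exists_ne (1 : G ⧸ N)
      rcases r.le_total 1 q with h | h
      · exact ⟨q, hq, h⟩
      · refine ⟨q⁻¹, inv_ne_one.mpr hq, ?_⟩
        have h2 := hr q 1 q⁻¹ h
        rwa [inv_mul_cancel, mul_one] at h2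
    obtain ⟨q0, hq0ne, hq0⟩ := key
    obtain ⟨g0, hg0⟩ := QuotientGroup.mk_surjective q0
    obtain ⟨g1, hg1⟩ := QuotientGroup.mk_surjective q0⁻¹
    refine ⟨{ carrier := {g : G | r.le 1 (QuotientGroup.mk g)}, mul_mem' := ?_ },
            { carrier := {g : G | r.le (QuotientGroup.mk g) 1}, mul_mem' := ?_ },
            ?_, ?_, ?_⟩
    · intro a b ha hb
      have ha' : r.le 1 (QuotientGroup.mk a) := ha
      have hb' : r.le 1 (QuotientGroup.mk b) := hb
      have h2 := hr 1 (QuotientGroup.mk b) (QuotientGroup.mk a) hb'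
      rw [mul_one] at h2
      show r.le 1 (QuotientGroup.mk (a * b))
      rw [show (QuotientGroup.mk (a * b) : G ⧸ N) = QuotientGroup.mk a * QuotientGroup.mk b
        from rfl]
      exact r.le_trans _ _ _ ha' h2
    · intro a b ha hb
      have ha' : r.le (QuotientGroup.mk a) 1 := ha
      have hb' : r.le (QuotientGroup.mk b) 1 := hb
      have h2 := hr (QuotientGroup.mk b) 1 (QuotientGroup.mk a) hb'
      rw [mul_one] at h2
      show r.le (QuotientGroup.mk (a * b)) 1
      rw [show (QuotientGroup.mk (a * b) : G ⧸ N) = QuotientGroup.mk a * QuotientGroup.mk b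
        from rfl]
      exact r.le_trans _ _ _ h2 ha'
    · intro huniv
      have hg1mem : g1 ∈ {g : G | r.le 1 (QuotientGroup.mk g)} := by
        have : g1 ∈ (Set.univ : Set G) := trivial
        rw [← huniv] at this
        exact this
      have h3' : r.le 1 (QuotientGroup.mk g1) := hg1mem
      have h3 : r.le 1 q0⁻¹ := by rwa [hg1] at h3'
      have h4 := hr 1 q0⁻¹ q0 h3
      rw [mul_one, mul_inv_cancel] at h4
      exact hq0ne (r.le_antisymm _ _ h4 hq0)
    · intro huniv
      have hg0mem : g0 ∈ {g : G | r.le (QuotientGroup.mk g) 1} := by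
        have : g0 ∈ (Set.univ : Set G) := trivial
        rw [← huniv] at this
        exact this
      have h3' : r.le (QuotientGroup.mk g0) 1 := hg0mem
      have h3 : r.le q0 1 := by rwa [hg0] at h3'
      exact hq0ne (r.le_antisymm _ _ h3 hq0)
    · apply Set.eq_univ_of_forall
      intro g
      rcases r.le_total 1 (QuotientGroup.mk g) with h | h
      · exact Or.inl h
      · exact Or.inr h
end

section
/- Let G be a group and A, B proper subsemigroups of G with A ∪ B = G and 1 ∈ A ∩ B. Set I = A ∩ B. Then the subgroup of G generated by I is contained in A or contained in B. -/
/-- If a subsemigroup contains `1` and contains `S` and the inverses of elements of `S`,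
then it contains the subgroup closure of `S`. -/
lemma closure_subset_of_inv_mem {G : Type*} [Group G] (A : Subsemigroup G)
    (h1 : (1 : G) ∈ A) (S : Set G) (hS : S ⊆ (A : Set G))
    (hSi : ∀ x ∈ S, x⁻¹ ∈ (A : Set G)) :
    (Subgroup.closure S : Set G) ⊆ (A : Set G) := by
  let A' : Submonoid G := { toSubsemigroup := A, one_mem' := h1 }
  intro x hx
  have hx' : x ∈ Submonoid.closure (S ∪ S⁻¹) := by
    rw [← Subgroup.closure_toSubmonoid]; exact hx
  have hle : Submonoid.closure (S ∪ S⁻¹) ≤ A' := by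
    rw [Submonoid.closure_le]
    rintro y (hy | hy)
    · exact hS hy
    · exact (by simpa using hSi y⁻¹ hy : y ∈ A)
  exact hle hx'

/-- **Lemma 2.2.** If a group `G` is the union of two proper subsemigroups
`A` and `B` with `1 ∈ A ∩ B`, then the subgroup generated by `I = A ∩ B` is contained in
`A` or in `B`. -/
theorem closure_inter_subset_or {G : Type*} [Group G] (A B : Subsemigroup G)
    (hA : (A : Set G) ≠ Set.univ) (hB : (B : Set G) ≠ Set.univ)
    (hunion : (A : Set G) ∪ (B : Set G) = Set.univ)
    (hone : (1 : G) ∈ (A : Set G) ∩ (B : Set G)) :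
    (Subgroup.closure ((A : Set G) ∩ (B : Set G)) : Set G) ⊆ (A : Set G) ∨
      (Subgroup.closure ((A : Set G) ∩ (B : Set G)) : Set G) ⊆ (B : Set G) := by
  set S : Set G := (A : Set G) ∩ (B : Set G) with hSdef
  have hcover : ∀ g : G, g ∈ (A : Set G) ∨ g ∈ (B : Set G) := by
    intro g
    have : g ∈ (A : Set G) ∪ (B : Set G) := by rw [hunion]; trivial
    exact this
  by_cases hcase : ∀ x ∈ S, x⁻¹ ∈ (A : Set G)
  · left
    exact closure_subset_of_inv_mem A hone.1 S (fun x hx => hx.1) hcase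
  · right
    push_neg at hcase
    obtain ⟨p, hpS, hpA⟩ := hcase
    have hpB : p⁻¹ ∈ (B : Set G) := (hcover p⁻¹).resolve_left hpA
    refine closure_subset_of_inv_mem B hone.2 S (fun x hx => hx.2) ?_
    intro q hqS
    by_contra hqB
    have hqA : q⁻¹ ∈ (A : Set G) := (hcover q⁻¹).resolve_right hqB
    rcases hcover (q⁻¹ * p⁻¹) with h | h
    · -- then p⁻¹ = q * (q⁻¹ * p⁻¹) ∈ A
      have : p⁻¹ ∈ (A : Set G) := by
        have := A.mul_mem hqS.1 h
        simpa using this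
      exact hpA this
    · -- then q⁻¹ = (q⁻¹ * p⁻¹) * p ∈ B
      have : q⁻¹ ∈ (B : Set G) := by
        have := B.mul_mem h hpS.2
        simpa [mul_assoc] using this
      exact hqB this
end

section
/- Let G be a group and A, B proper subsemigroups of G with A ∪ B = G, 1 ∈ A ∩ B, and such that the subgroup generated by I = A ∩ B is contained in B. Let H = {h ∈ B | h⁻¹ ∈ B}. Then for every h ∈ H: h·(A \ I) = A \ I, (A \ I)·h = A \ I, h·(B \ H) = B \ H, and (B \ H)·h = B \ H (where for a set S and element h, h·S = {h·s | s ∈ S} and S·h = {s·h | s ∈ S}). -/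
/-- **Lemma 2.3.** Let `G = A ∪ B` with `A`, `B` proper subsemigroups,
`1 ∈ A ∩ B`, and the subgroup generated by `I = A ∩ B` contained in `B`. Let
`H = {h ∈ B | h⁻¹ ∈ B}`. Then for every `h ∈ H`,
`h(A \ I) = A \ I = (A \ I)h` and `h(B \ H) = B \ H = (B \ H)h`. -/
theorem H_stabilizes_AminusI_and_BminusH {G : Type*} [Group G] (A B : Subsemigroup G)
    (hA : (A : Set G) ≠ Set.univ) (hB : (B : Set G) ≠ Set.univ)
    (hunion : (A : Set G) ∪ (B : Set G) = Set.univ)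
    (hone : (1 : G) ∈ (A : Set G) ∩ (B : Set G))
    (hclosure : (Subgroup.closure ((A : Set G) ∩ (B : Set G)) : Set G) ⊆ (B : Set G)) :
    ∀ h ∈ {h : G | h ∈ B ∧ h⁻¹ ∈ B},
      (fun x => h * x) '' ((A : Set G) \ ((A : Set G) ∩ (B : Set G))) =
          (A : Set G) \ ((A : Set G) ∩ (B : Set G)) ∧
      (fun x => x * h) '' ((A : Set G) \ ((A : Set G) ∩ (B : Set G))) =
          (A : Set G) \ ((A : Set G) ∩ (B : Set G)) ∧
      (fun x => h * x) '' ((B : Set G) \ {h : G | h ∈ B ∧ h⁻¹ ∈ B}) =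
          (B : Set G) \ {h : G | h ∈ B ∧ h⁻¹ ∈ B} ∧
      (fun x => x * h) '' ((B : Set G) \ {h : G | h ∈ B ∧ h⁻¹ ∈ B}) =
          (B : Set G) \ {h : G | h ∈ B ∧ h⁻¹ ∈ B} := by
  -- key facts about multiplication by elements of H
  have key1 : ∀ h : G, h ∈ B → h⁻¹ ∈ B → ∀ x : G, x ∈ A → x ∉ B →
      h * x ∈ (A : Set G) ∧ h * x ∉ B := by
    intro h hh hh' x hxA hxB
    have hnB : h * x ∉ B := fun hmem => hxB (by
      have := mul_mem hh' hmem
      rwa [← mul_assoc, inv_mul_cancel, one_mul] at this)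
    have : h * x ∈ (A : Set G) ∪ (B : Set G) := hunion ▸ Set.mem_univ _
    exact ⟨this.resolve_right hnB, hnB⟩
  have key2 : ∀ h : G, h ∈ B → h⁻¹ ∈ B → ∀ x : G, x ∈ A → x ∉ B →
      x * h ∈ (A : Set G) ∧ x * h ∉ B := by
    intro h hh hh' x hxA hxB
    have hnB : x * h ∉ B := fun hmem => hxB (by
      have := mul_mem hmem hh'
      rwa [mul_assoc, mul_inv_cancel, mul_one] at this)
    have : x * h ∈ (A : Set G) ∪ (B : Set G) := hunion ▸ Set.mem_univ _
    exact ⟨this.resolve_right hnB, hnB⟩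
  have key3 : ∀ h : G, h ∈ B → h⁻¹ ∈ B → ∀ x : G, x ∈ B → x⁻¹ ∉ B →
      h * x ∈ B ∧ (h * x)⁻¹ ∉ B := by
    intro h hh hh' x hxB hxi
    refine ⟨mul_mem hh hxB, fun hmem => hxi ?_⟩
    have := mul_mem hmem hh
    rwa [mul_inv_rev, mul_assoc, inv_mul_cancel, mul_one] at this
  have key4 : ∀ h : G, h ∈ B → h⁻¹ ∈ B → ∀ x : G, x ∈ B → x⁻¹ ∉ B →
      x * h ∈ B ∧ (x * h)⁻¹ ∉ B := by
    intro h hh hh' x hxB hxi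
    refine ⟨mul_mem hxB hh, fun hmem => hxi ?_⟩
    have := mul_mem hh hmem
    rwa [mul_inv_rev, ← mul_assoc, mul_inv_cancel, one_mul] at this
  rintro h ⟨hh, hh'⟩
  have hh'' : (h⁻¹)⁻¹ ∈ B := by rwa [inv_inv]
  refine ⟨?_, ?_, ?_, ?_⟩
  · ext x
    constructor
    · rintro ⟨a, ⟨haA, haI⟩, rfl⟩
      have haB : a ∉ B := fun hb => haI ⟨haA, hb⟩
      obtain ⟨h1, h2⟩ := key1 h hh hh' a haA haB
      exact ⟨h1, fun hi => h2 hi.2⟩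
    · rintro ⟨hxA, hxI⟩
      have hxB : x ∉ B := fun hb => hxI ⟨hxA, hb⟩
      obtain ⟨h1, h2⟩ := key1 h⁻¹ hh' hh'' x hxA hxB
      exact ⟨h⁻¹ * x, ⟨h1, fun hi => h2 hi.2⟩, by group⟩
  · ext x
    constructor
    · rintro ⟨a, ⟨haA, haI⟩, rfl⟩
      have haB : a ∉ B := fun hb => haI ⟨haA, hb⟩
      obtain ⟨h1, h2⟩ := key2 h hh hh' a haA haB
      exact ⟨h1, fun hi => h2 hi.2⟩
    · rintro ⟨hxA, hxI⟩
      have hxB : x ∉ B := fun hb => hxI ⟨hxA, hb⟩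
      obtain ⟨h1, h2⟩ := key2 h⁻¹ hh' hh'' x hxA hxB
      exact ⟨x * h⁻¹, ⟨h1, fun hi => h2 hi.2⟩, by group⟩
  · ext x
    constructor
    · rintro ⟨a, ⟨haB, haH⟩, rfl⟩
      have hai : a⁻¹ ∉ B := fun hb => haH ⟨haB, hb⟩
      obtain ⟨h1, h2⟩ := key3 h hh hh' a haB hai
      exact ⟨h1, fun hi => h2 hi.2⟩
    · rintro ⟨hxB, hxH⟩
      have hxi : x⁻¹ ∉ B := fun hb => hxH ⟨hxB, hb⟩
      obtain ⟨h1, h2⟩ := key3 h⁻¹ hh' hh'' x hxB hxi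
      exact ⟨h⁻¹ * x, ⟨h1, fun hi => h2 hi.2⟩, by group⟩
  · ext x
    constructor
    · rintro ⟨a, ⟨haB, haH⟩, rfl⟩
      have hai : a⁻¹ ∉ B := fun hb => haH ⟨haB, hb⟩
      obtain ⟨h1, h2⟩ := key4 h hh hh' a haB hai
      exact ⟨h1, fun hi => h2 hi.2⟩
    · rintro ⟨hxB, hxH⟩
      have hxi : x⁻¹ ∉ B := fun hb => hxH ⟨hxB, hb⟩
      obtain ⟨h1, h2⟩ := key4 h⁻¹ hh' hh'' x hxB hxi
      exact ⟨x * h⁻¹, ⟨h1, fun hi => h2 hi.2⟩, by group⟩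
end

section
/- Let G be a group and A, B proper subsemigroups of G with A ∪ B = G, 1 ∈ A ∩ B, and such that the subgroup generated by I = A ∩ B is contained in B. Let H = {h ∈ B | h⁻¹ ∈ B}. If there exists h ∈ H with h ∉ I, then (A \ I)⁻¹ = B \ H, where (A \ I)⁻¹ = {a⁻¹ | a ∈ A \ I}. -/
/-- **Lemma 2.4.** Let `G = A ∪ B` with `A`, `B` proper subsemigroups,
`1 ∈ A ∩ B`, and the subgroup generated by `I = A ∩ B` contained in `B`. Let
`H = {h ∈ B | h⁻¹ ∈ B}`. If there exists `h ∈ H` with `h ∉ I`, then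
`(A \ I)⁻¹ = B \ H`. -/
theorem inv_AminusI_eq_BminusH {G : Type*} [Group G] (A B : Subsemigroup G)
    (hA : (A : Set G) ≠ Set.univ) (hB : (B : Set G) ≠ Set.univ)
    (hunion : (A : Set G) ∪ (B : Set G) = Set.univ)
    (hone : (1 : G) ∈ (A : Set G) ∩ (B : Set G))
    (hclosure : (Subgroup.closure ((A : Set G) ∩ (B : Set G)) : Set G) ⊆ (B : Set G))
    (hex : ∃ h ∈ {h : G | h ∈ B ∧ h⁻¹ ∈ B}, h ∉ (A : Set G) ∩ (B : Set G)) :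
    ((A : Set G) \ ((A : Set G) ∩ (B : Set G)))⁻¹ =
      (B : Set G) \ {h : G | h ∈ B ∧ h⁻¹ ∈ B} := by
  obtain ⟨h, ⟨hhB, hhiB⟩, hhI⟩ := hex
  have hhA : h ∉ A := fun ha => hhI ⟨ha, hhB⟩
  have hor : ∀ y : G, y ∈ A ∨ y ∈ B := by
    intro y
    have : y ∈ (A : Set G) ∪ (B : Set G) := by rw [hunion]; exact Set.mem_univ y
    simpa using this
  have hAB : ∀ y : G, y ∉ A → y ∈ B := fun y hy => (hor y).resolve_left hy
  have hBA : ∀ y : G, y ∉ B → y ∈ A := fun y hy => (hor y).resolve_right hy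
  ext x
  simp only [Set.mem_inv, Set.mem_diff, Set.mem_inter_iff, Set.mem_setOf_eq,
    SetLike.mem_coe]
  constructor
  · rintro ⟨hxA, hxI⟩
    have hxiB : x⁻¹ ∉ B := fun hb => hxI ⟨hxA, hb⟩
    have hxB : x ∈ B := by
      by_contra hc
      have hxA2 : x ∈ A := by
        by_contra hc2
        exact hc (hAB x hc2)
      -- x ∈ A, x⁻¹ ∈ A, both not in B
      have hxhA : x * h ∈ A := by
        by_contra hc3
        have hxhB : x * h ∈ B := hAB _ hc3
        have : x ∈ B := by
          have := B.mul_mem hxhB hhiB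
          simpa using this
        exact hc this
      have : h ∈ A := by
        have := A.mul_mem hxA hxhA
        simpa [mul_assoc] using this
      exact hhA this
    exact ⟨hxB, fun ⟨_, hbi⟩ => hxiB hbi⟩
  · rintro ⟨hxB, hxH⟩
    have hxiB : x⁻¹ ∉ B := fun hb => hxH ⟨hxB, hb⟩
    have hxiA : x⁻¹ ∈ A := hBA _ hxiB
    exact ⟨hxiA, fun ⟨_, hb⟩ => hxiB hb⟩
end

section
/- Let G be a group and A, B proper subsemigroups of G with A ∪ B = G, 1 ∈ A ∩ B, I = A ∩ B, and H = {h ∈ B | h⁻¹ ∈ B}. Assume that (A \ I)⁻¹ = B \ H, where (A \ I)⁻¹ = {a⁻¹ | a ∈ A \ I}. Then A \ I is closed under multiplication: for all a₁, a₂ ∈ A \ I, a₁·a₂ ∈ A \ I. -/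
/-- **Lemma 2.5.** Let `G = A ∪ B` with `A`, `B` proper subsemigroups,
`1 ∈ A ∩ B`, `I = A ∩ B`, `H = {h ∈ B | h⁻¹ ∈ B}`, and assume `(A \ I)⁻¹ = B \ H`.
Then `A \ I` is closed under multiplication. -/
theorem AminusI_mul_closed {G : Type*} [Group G] (A B : Subsemigroup G)
    (hA : (A : Set G) ≠ Set.univ) (hB : (B : Set G) ≠ Set.univ)
    (hunion : (A : Set G) ∪ (B : Set G) = Set.univ)
    (hone : (1 : G) ∈ (A : Set G) ∩ (B : Set G))
    (hinv : ((A : Set G) \ ((A : Set G) ∩ (B : Set G)))⁻¹ =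
      (B : Set G) \ {h : G | h ∈ B ∧ h⁻¹ ∈ B}) :
    ∀ a₁ ∈ (A : Set G) \ ((A : Set G) ∩ (B : Set G)),
      ∀ a₂ ∈ (A : Set G) \ ((A : Set G) ∩ (B : Set G)),
        a₁ * a₂ ∈ (A : Set G) \ ((A : Set G) ∩ (B : Set G)) := by
  intro a₁ h1 a₂ h2
  have hinv1 : a₁⁻¹ ∈ (B : Set G) \ {h : G | h ∈ B ∧ h⁻¹ ∈ B} := by
    rw [← hinv]; simpa using h1
  refine ⟨A.mul_mem h1.1 h2.1, ?_⟩
  rintro ⟨-, hmem⟩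
  have ha2B : a₂ ∈ B := by
    have := B.mul_mem hinv1.1 hmem
    simpa using this
  exact h2.2 ⟨h2.1, ha2B⟩
end

section
/- Let G be a group that is the union of two proper subsemigroups. Then there exist proper subsemigroups A, B of G such that A ∪ B = G, A ∩ B = {1}, and for every a ∈ A with a ≠ 1, one has a⁻¹ ∉ A and a⁻¹ ∈ B. -/
private lemma aux_semigroup_cover {G : Type*} [Group G] (P Q : Subsemigroup G)
    (hP : (P : Set G) ≠ Set.univ) (hQ : (Q : Set G) ≠ Set.univ)
    (hu : (P : Set G) ∪ (Q : Set G) = Set.univ)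
    (H : ∀ x : G, x ∉ P → x⁻¹ ∈ P → x⁻¹ ∈ Q → False) :
    ∃ A B : Subsemigroup G, (A : Set G) ≠ Set.univ ∧ (B : Set G) ≠ Set.univ ∧
      (A : Set G) ∪ (B : Set G) = Set.univ ∧ (A : Set G) ∩ (B : Set G) = {1} ∧
      ∀ a ∈ A, a ≠ 1 → a⁻¹ ∉ A ∧ a⁻¹ ∈ B := by
  have mem : ∀ x : G, x ∈ P ∨ x ∈ Q := by
    intro x
    have := Set.eq_univ_iff_forall.mp hu x
    exact this
  -- a witness outside Q (hence in P) and outside P (hence in Q)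
  obtain ⟨p, hpQ⟩ : ∃ p : G, p ∉ Q := by
    by_contra h; push_neg at h; exact hQ (Set.eq_univ_iff_forall.mpr h)
  obtain ⟨q, hqP⟩ : ∃ q : G, q ∉ P := by
    by_contra h; push_neg at h; exact hP (Set.eq_univ_iff_forall.mpr h)
  have hpP : p ∈ P := (mem p).resolve_right hpQ
  have hqQ : q ∈ Q := (mem q).resolve_left hqP
  -- G is nontrivial
  obtain ⟨e, he⟩ : ∃ e : G, e ≠ 1 := by
    by_contra h
    push_neg at h
    rcases mem 1 with h1 | h1
    · exact hqP (h q ▸ h1)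
    · exact hpQ (h p ▸ h1)
  -- the semigroup A = (P \ P⁻¹) ∪ {1}
  set A : Subsemigroup G :=
    { carrier := {x : G | (x ∈ P ∧ x⁻¹ ∉ P) ∨ x = 1}
      mul_mem' := by
        rintro a b (⟨haP, haI⟩ | rfl) (⟨hbP, hbI⟩ | rfl)
        · left
          refine ⟨P.mul_mem haP hbP, fun h => haI ?_⟩
          have : b * (a * b)⁻¹ ∈ P := P.mul_mem hbP h
          have e : b * (a * b)⁻¹ = a⁻¹ := by group
          rwa [e] at this
        · left; simpa using And.intro haP haI
        · left; simpa using And.intro hbP hbI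
        · right; simp } with hAdef
  -- the semigroup B = complement of P \ P⁻¹
  set B : Subsemigroup G :=
    { carrier := {x : G | x ∉ P ∨ x⁻¹ ∈ P}
      mul_mem' := by
        rintro a b (haP | haI) (hbP | hbI)
        · -- a ∉ P, b ∉ P : use hypothesis H
          show a * b ∉ P ∨ (a * b)⁻¹ ∈ P
          by_cases h2 : (a * b)⁻¹ ∈ P
          · exact Or.inr h2
          left
          intro habP
          have haQ : a ∈ Q := (mem a).resolve_left haP
          have hbQ : b ∈ Q := (mem b).resolve_left hbP
          refine H (a * b)⁻¹ h2 ?_ ?_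
          · simpa using habP
          · simpa using Q.mul_mem haQ hbQ
        · -- a ∉ P, b⁻¹ ∈ P
          show a * b ∉ P ∨ (a * b)⁻¹ ∈ P
          left
          intro habP
          refine haP ?_
          have : (a * b) * b⁻¹ ∈ P := P.mul_mem habP hbI
          have e : (a * b) * b⁻¹ = a := by group
          rwa [e] at this
        · -- a⁻¹ ∈ P, b ∉ P
          show a * b ∉ P ∨ (a * b)⁻¹ ∈ P
          left
          intro habP
          refine hbP ?_
          have : a⁻¹ * (a * b) ∈ P := P.mul_mem haI habP
          have e : a⁻¹ * (a * b) = b := by group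
          rwa [e] at this
        · right
          have : b⁻¹ * a⁻¹ ∈ P := P.mul_mem hbI haI
          have e : b⁻¹ * a⁻¹ = (a * b)⁻¹ := by group
          rwa [e] at this } with hBdef
  have hmemA : ∀ x : G, x ∈ A ↔ ((x ∈ P ∧ x⁻¹ ∉ P) ∨ x = 1) := fun x => Iff.rfl
  have hmemB : ∀ x : G, x ∈ B ↔ (x ∉ P ∨ x⁻¹ ∈ P) := fun x => Iff.rfl
  refine ⟨A, B, ?_, ?_, ?_, ?_, ?_⟩
  · -- A proper
    intro h
    have hx : e ∈ A := Set.eq_univ_iff_forall.mp h e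
    have hxi : e⁻¹ ∈ A := Set.eq_univ_iff_forall.mp h e⁻¹
    rcases (hmemA e).mp hx with ⟨heP, heI⟩ | h1
    · rcases (hmemA e⁻¹).mp hxi with ⟨heP', _⟩ | h1
      · exact heI heP'
      · exact he (by simpa using congrArg (·⁻¹) h1)
    · exact he h1
  · -- B proper: need some x ∈ P with x⁻¹ ∉ P
    intro h
    have hsym : ∀ x : G, x ∈ P → x⁻¹ ∈ P := by
      intro x hx
      have hxB : x ∈ B := Set.eq_univ_iff_forall.mp h x
      rcases (hmemB x).mp hxB with h' | h'
      · exact absurd hx h'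
      · exact h'
    have hqinv : q⁻¹ ∈ Q := by
      rcases mem q⁻¹ with h' | h'
      · exact absurd (by simpa using hsym q⁻¹ h') hqP
      · exact h'
    rcases mem (p * q) with h' | h'
    · have : p⁻¹ * (p * q) ∈ P := P.mul_mem (hsym p hpP) h'
      have e : p⁻¹ * (p * q) = q := by group
      exact hqP (e ▸ this)
    · have : (p * q) * q⁻¹ ∈ Q := Q.mul_mem h' hqinv
      have e : (p * q) * q⁻¹ = p := by group
      exact hpQ (e ▸ this)
  · -- union
    apply Set.eq_univ_iff_forall.mpr
    intro x
    by_cases hx : x ∈ P ∧ x⁻¹ ∉ P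
    · exact Or.inl (Or.inl hx)
    · right
      rcases not_and_or.mp hx with h' | h'
      · exact Or.inl h'
      · exact Or.inr (not_not.mp h')
  · -- intersection
    ext x
    simp only [Set.mem_inter_iff, Set.mem_singleton_iff]
    constructor
    · rintro ⟨hxA, hxB⟩
      rcases (hmemA x).mp hxA with ⟨hxP, hxI⟩ | h1
      · rcases (hmemB x).mp hxB with h' | h'
        · exact absurd hxP h'
        · exact absurd h' hxI
      · exact h1
    · rintro rfl
      refine ⟨Or.inr rfl, ?_⟩
      by_cases h1 : (1 : G) ∈ P
      · exact Or.inr (by simpa using h1)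
      · exact Or.inl h1
  · -- inverses
    intro a haA ha1
    rcases (hmemA a).mp haA with ⟨haP, haI⟩ | h1
    · refine ⟨?_, Or.inl haI⟩
      intro h
      rcases (hmemA a⁻¹).mp h with ⟨h', _⟩ | h1
      · exact haI h'
      · exact ha1 (by simpa using congrArg (·⁻¹) h1)
    · exact absurd h1 ha1

/-- If a group `G` is the union of two proper subsemigroups, then there
exist proper subsemigroups `A`, `B` of `G` with `A ∪ B = G`, `A ∩ B = {1}`, and such that
every non-identity `a ∈ A` satisfies `a⁻¹ ∉ A` and `a⁻¹ ∈ B`. -/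
theorem exists_normalized_semigroup_cover {G : Type*} [Group G] (A₀ B₀ : Subsemigroup G)
    (hA₀ : (A₀ : Set G) ≠ Set.univ) (hB₀ : (B₀ : Set G) ≠ Set.univ)
    (hunion₀ : (A₀ : Set G) ∪ (B₀ : Set G) = Set.univ) :
    ∃ A B : Subsemigroup G, (A : Set G) ≠ Set.univ ∧ (B : Set G) ≠ Set.univ ∧
      (A : Set G) ∪ (B : Set G) = Set.univ ∧ (A : Set G) ∩ (B : Set G) = {1} ∧
      ∀ a ∈ A, a ≠ 1 → a⁻¹ ∉ A ∧ a⁻¹ ∈ B := by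
  have mem : ∀ x : G, x ∈ A₀ ∨ x ∈ B₀ := by
    intro x
    have := Set.eq_univ_iff_forall.mp hunion₀ x
    exact this
  by_cases H : ∀ x : G, x ∉ A₀ → x⁻¹ ∈ A₀ → x⁻¹ ∈ B₀ → False
  · exact aux_semigroup_cover A₀ B₀ hA₀ hB₀ hunion₀ H
  · push_neg at H
    obtain ⟨x, hxA, hxiA, hxiB, -⟩ := H
    apply aux_semigroup_cover B₀ A₀ hB₀ hA₀ (by rw [Set.union_comm]; exact hunion₀)
    intro y hyB hyiB hyiA
    -- x ∉ A₀, x⁻¹ ∈ A₀ ∩ B₀ ; y ∉ B₀, y⁻¹ ∈ A₀ ∩ B₀ : contradiction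
    have hxB : x ∈ B₀ := (mem x).resolve_left hxA
    have hyA : y ∈ A₀ := (mem y).resolve_right hyB
    rcases mem (x * y) with h' | h'
    · have : (x * y) * y⁻¹ ∈ A₀ := A₀.mul_mem h' hyiA
      have e : (x * y) * y⁻¹ = x := by group
      exact hxA (e ▸ this)
    · have : x⁻¹ * (x * y) ∈ B₀ := B₀.mul_mem hxiB h'
      have e : x⁻¹ * (x * y) = y := by group
      exact hyB (e ▸ this)
end

section
/- Let G be a group generated by its elements of finite order, i.e., the subgroup generated by {g ∈ G | g has finite order} is all of G. Then G is not the union of two proper subsemigroups: for all subsemigroups A, B of G with A ∪ B = G, either A = G or B = G. -/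
/-- A subsemigroup containing a positive power chain: positive powers of a member stay in. -/
lemma subsemigroup_pow_mem' {G : Type*} [Group G] (S : Subsemigroup G) {g : G} (hg : g ∈ S) :
    ∀ n : ℕ, g ^ (n + 1) ∈ S := by
  intro n
  induction n with
  | zero => simpa using hg
  | succ k ih => rw [pow_succ]; exact S.mul_mem ih hg

/-- A subsemigroup containing a torsion element contains its inverse. -/
lemma subsemigroup_inv_mem_of_finOrder {G : Type*} [Group G] (S : Subsemigroup G) {g : G}
    (hfin : IsOfFinOrder g) (hg : g ∈ S) : g⁻¹ ∈ S := by
  obtain ⟨n, hn, hgn⟩ := hfin.exists_pow_eq_one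
  have h1 : g ^ (2 * n - 1 + 1) ∈ S := subsemigroup_pow_mem' S hg (2 * n - 1)
  have h2 : 2 * n - 1 + 1 = 2 * n := by omega
  have h3 : g ^ (2 * n) = 1 := by rw [two_mul, pow_add, hgn, one_mul]
  have : g ^ (2 * n - 1) = g⁻¹ := by
    have := h3
    rw [← h2, pow_succ] at this
    exact eq_inv_of_mul_eq_one_left this
  rw [h2] at h1
  -- redo: we want g^(2n-1) ∈ S
  have h1' : g ^ (2 * n - 1) ∈ S := by
    have e : 2 * n - 1 = (2 * n - 2) + 1 := by omega
    rw [e]; exact subsemigroup_pow_mem' S hg _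
  rwa [this] at h1'

/-- **Proposition 2.6.** A group generated by its elements of finite order
is not the union of two proper subsemigroups. -/
theorem not_union_of_two_proper_subsemigroups_of_torsion_generated {G : Type*} [Group G]
    (hgen : Subgroup.closure {g : G | IsOfFinOrder g} = ⊤) :
    ∀ A B : Subsemigroup G, (A : Set G) ∪ (B : Set G) = Set.univ →
      (A : Set G) = Set.univ ∨ (B : Set G) = Set.univ := by
  intro A B hAB
  have key : ∀ S : Subsemigroup G, {g : G | IsOfFinOrder g} ⊆ (S : Set G) →
      (S : Set G) = Set.univ := by
    intro S hS
    apply Set.eq_univ_of_forall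
    intro x
    have hx : x ∈ Subgroup.closure {g : G | IsOfFinOrder g} := by
      rw [hgen]; exact Subgroup.mem_top x
    have hmain : x ∈ S ∧ x⁻¹ ∈ S := by
      refine Subgroup.closure_induction ?_ ?_ ?_ ?_ hx
      · intro g hg
        exact ⟨hS hg, hS (Set.mem_setOf.mpr ((Set.mem_setOf.mp hg).inv))⟩
      · exact ⟨hS (Set.mem_setOf.mpr IsOfFinOrder.one), by
          simpa using hS (Set.mem_setOf.mpr (IsOfFinOrder.one (G := G)))⟩
      · intro x y _ _ hx hy
        refine ⟨S.mul_mem hx.1 hy.1, ?_⟩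
        rw [mul_inv_rev]; exact S.mul_mem hy.2 hx.2
      · intro x _ hx
        exact ⟨hx.2, by simpa using hx.1⟩
    exact hmain.1
  by_cases hA : {g : G | IsOfFinOrder g} ⊆ (A : Set G)
  · exact Or.inl (key A hA)
  by_cases hB : {g : G | IsOfFinOrder g} ⊆ (B : Set G)
  · exact Or.inr (key B hB)
  exfalso
  obtain ⟨g, hgT, hgA⟩ := Set.not_subset.mp hA
  obtain ⟨h, hhT, hhB⟩ := Set.not_subset.mp hB
  have hmem : ∀ z : G, z ∈ A ∨ z ∈ B := by
    intro z
    have : z ∈ (A : Set G) ∪ (B : Set G) := hAB ▸ Set.mem_univ z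
    exact this
  have hgB : g ∈ B := (hmem g).resolve_left hgA
  have hhA : h ∈ A := (hmem h).resolve_right hhB
  have hginv : g⁻¹ ∈ B := subsemigroup_inv_mem_of_finOrder B hgT hgB
  have hhinv : h⁻¹ ∈ A := subsemigroup_inv_mem_of_finOrder A hhT hhA
  rcases hmem (g * h) with hgh | hgh
  · exact hgA (by simpa using A.mul_mem hgh hhinv)
  · exact hhB (by simpa using B.mul_mem hginv hgh)
end

section
/- Let G be a group and A, B proper subsemigroups of G with A ∪ B = G, A ∩ B = {1}, such that for every a ∈ A with a ≠ 1 one has a⁻¹ ∈ B and a⁻¹ ∉ A. Let H = {h ∈ B | h⁻¹ ∈ B}, fix g ∈ G, and set H_A = {h ∈ H | g⁻¹·h·g ∈ A} and H_B = {h ∈ H | g⁻¹·h·g ∈ B}. Then A' = A ∪ H_A and B' = (B \ H_A) ∪ {1} are both closed under multiplication (subsemigroups of G). -/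
/-- **Lemma 2.7.** Let `G = A ∪ B` with `A`, `B` proper subsemigroups,
`A ∩ B = {1}`, and every non-identity `a ∈ A` has `a⁻¹ ∈ B` and `a⁻¹ ∉ A`. Let
`H = {h ∈ B | h⁻¹ ∈ B}`, fix `g ∈ G`, and set `H_A = {h ∈ H | g⁻¹hg ∈ A}`. Then
`A' = A ∪ H_A` and `B' = (B \ H_A) ∪ {1}` are closed under multiplication. -/
theorem Aprime_Bprime_subsemigroups {G : Type*} [Group G] (A B : Subsemigroup G)
    (hA : (A : Set G) ≠ Set.univ) (hB : (B : Set G) ≠ Set.univ)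
    (hunion : (A : Set G) ∪ (B : Set G) = Set.univ)
    (hinter : (A : Set G) ∩ (B : Set G) = {1})
    (hinv : ∀ a ∈ A, a ≠ 1 → a⁻¹ ∈ B ∧ a⁻¹ ∉ A)
    (g : G) :
    (∀ x ∈ (A : Set G) ∪ {h : G | (h ∈ B ∧ h⁻¹ ∈ B) ∧ g⁻¹ * h * g ∈ A},
      ∀ y ∈ (A : Set G) ∪ {h : G | (h ∈ B ∧ h⁻¹ ∈ B) ∧ g⁻¹ * h * g ∈ A},
        x * y ∈ (A : Set G) ∪ {h : G | (h ∈ B ∧ h⁻¹ ∈ B) ∧ g⁻¹ * h * g ∈ A}) ∧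
    (∀ x ∈ ((B : Set G) \ {h : G | (h ∈ B ∧ h⁻¹ ∈ B) ∧ g⁻¹ * h * g ∈ A}) ∪ {1},
      ∀ y ∈ ((B : Set G) \ {h : G | (h ∈ B ∧ h⁻¹ ∈ B) ∧ g⁻¹ * h * g ∈ A}) ∪ {1},
        x * y ∈ ((B : Set G) \ {h : G | (h ∈ B ∧ h⁻¹ ∈ B) ∧ g⁻¹ * h * g ∈ A}) ∪ {1}) := by
  have h1 : (1:G) ∈ ((A : Set G) ∩ (B : Set G)) := by rw [hinter]; rfl
  have h1A : (1:G) ∈ A := h1.1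
  have h1B : (1:G) ∈ B := h1.2
  have htot : ∀ x : G, x ∈ A ∨ x ∈ B := by
    intro x
    have : x ∈ ((A : Set G) ∪ (B : Set G)) := by rw [hunion]; trivial
    exact this
  have hnB : ∀ a, a ∈ A → a ≠ 1 → a ∉ B := by
    intro a ha hne hb
    exact hne (by have : a ∈ ((A : Set G) ∩ B) := ⟨ha, hb⟩; rwa [hinter] at this)
  have key : ∀ a ∈ A, a ≠ 1 → ∀ h, h ∈ B → h⁻¹ ∈ B → a * h ∈ A ∧ h * a ∈ A := by
    intro a ha hne h hh hh'
    constructor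
    · rcases htot (a * h) with h' | h'
      · exact h'
      · exact absurd (by simpa using B.mul_mem h' hh') (hnB a ha hne)
    · rcases htot (h * a) with h' | h'
      · exact h'
      · exact absurd (by simpa using B.mul_mem hh' h') (hnB a ha hne)
  have h1HA : (1:G) ∈ {h : G | (h ∈ B ∧ h⁻¹ ∈ B) ∧ g⁻¹ * h * g ∈ A} := by
    refine ⟨⟨h1B, by simpa using h1B⟩, by simpa using h1A⟩
  constructor
  · rintro x (hx | ⟨⟨hxB, hxiB⟩, hxc⟩) y (hy | ⟨⟨hyB, hyiB⟩, hyc⟩)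
    · exact Or.inl (A.mul_mem hx hy)
    · by_cases hx1 : x = 1
      · subst hx1; simpa using Or.inr ⟨⟨hyB, hyiB⟩, hyc⟩
      · exact Or.inl ((key x hx hx1 y hyB hyiB).1)
    · by_cases hy1 : y = 1
      · subst hy1; simpa using Or.inr ⟨⟨hxB, hxiB⟩, hxc⟩
      · exact Or.inl ((key y hy hy1 x hxB hxiB).2)
    · refine Or.inr ⟨⟨B.mul_mem hxB hyB, ?_⟩, ?_⟩
      · simpa [mul_inv_rev] using B.mul_mem hyiB hxiB
      · have e : g⁻¹ * (x * y) * g = (g⁻¹ * x * g) * (g⁻¹ * y * g) := by group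
        rw [e]; exact A.mul_mem hxc hyc
  · rintro x (⟨hxB, hxn⟩ | hx1) y (⟨hyB, hyn⟩ | hy1)
    · by_cases hxy1 : x * y = 1
      · exact Or.inr hxy1
      refine Or.inl ⟨B.mul_mem hxB hyB, ?_⟩
      rintro ⟨⟨hz, hzi⟩, hzc⟩
      by_cases hyi : y⁻¹ ∈ B
      · by_cases hxi : x⁻¹ ∈ B
        · -- both in H : conjugates of x, y are in B, product is in A ∩ B = {1}
          have hxc : g⁻¹ * x * g ∈ B := by
            rcases htot (g⁻¹ * x * g) with h' | h'
            · exact absurd ⟨⟨hxB, hxi⟩, h'⟩ hxn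
            · exact h'
          have hyc : g⁻¹ * y * g ∈ B := by
            rcases htot (g⁻¹ * y * g) with h' | h'
            · exact absurd ⟨⟨hyB, hyi⟩, h'⟩ hyn
            · exact h'
          have e : g⁻¹ * (x * y) * g = (g⁻¹ * x * g) * (g⁻¹ * y * g) := by group
          have hmem : g⁻¹ * (x * y) * g ∈ ((A : Set G) ∩ (B : Set G)) :=
            ⟨hzc, by rw [e]; exact B.mul_mem hxc hyc⟩
          rw [hinter] at hmem
          have e1 : g⁻¹ * (x * y) * g = 1 := hmem
          apply hxy1
          have := congrArg (fun t => g * t * g⁻¹) e1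
          simpa [mul_assoc] using this
        · -- x ∉ H : x⁻¹ ∈ A \ {1}, so y = x⁻¹ * (x*y) ∈ A, forcing y = 1
          have hxiA : x⁻¹ ∈ A := (htot x⁻¹).resolve_right hxi
          have hxine : x⁻¹ ≠ (1:G) := fun h => hxi (h ▸ h1B)
          have hyA : y ∈ A := by
            have := (key x⁻¹ hxiA hxine (x * y) hz hzi).1
            simpa [mul_assoc] using this
          have hy1' : y = 1 := by
            have : y ∈ ((A : Set G) ∩ B) := ⟨hyA, hyB⟩
            rwa [hinter] at this
          exact hyn (hy1' ▸ h1HA)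
      · -- y ∉ H : y⁻¹ ∈ A \ {1}, so x = (x*y) * y⁻¹ ∈ A, forcing x = 1
        have hyiA : y⁻¹ ∈ A := (htot y⁻¹).resolve_right hyi
        have hyine : y⁻¹ ≠ (1:G) := fun h => hyi (h ▸ h1B)
        have hxA : x ∈ A := by
          have := (key y⁻¹ hyiA hyine (x * y) hz hzi).2
          simpa [mul_assoc] using this
        have hx1' : x = 1 := by
          have : x ∈ ((A : Set G) ∩ B) := ⟨hxA, hxB⟩
          rwa [hinter] at this
        exact hxn (hx1' ▸ h1HA)
    · have hy : y = 1 := hy1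
      subst hy
      rw [mul_one]
      exact Or.inl ⟨hxB, hxn⟩
    · have hx : x = 1 := hx1
      subst hx
      rw [one_mul]
      exact Or.inl ⟨hyB, hyn⟩
    · have hx : x = 1 := hx1
      have hy : y = 1 := hy1
      subst hx; subst hy
      exact Or.inr (mul_one 1)
end

section
/- Let G be a group and A, B proper subsemigroups of G with A ∪ B = G, A ∩ B = {1}, such that for every a ∈ A with a ≠ 1 one has a⁻¹ ∈ B and a⁻¹ ∉ A. Let H = {h ∈ B | h⁻¹ ∈ B}, fix g ∈ G, set H_A = {h ∈ H | g⁻¹·h·g ∈ A}, A' = A ∪ H_A, and B' = (B \ H_A) ∪ {1}. Then for every a ∈ A' with a ≠ 1, one has a⁻¹ ∈ B'. -/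
/-- **Lemma 2.8.** With `G = A ∪ B`, `A ∩ B = {1}`, non-identity elements of
`A` having inverses in `B` and not in `A`, `H = {h ∈ B | h⁻¹ ∈ B}`, a fixed `g ∈ G`,
`H_A = {h ∈ H | g⁻¹hg ∈ A}`, `A' = A ∪ H_A`, and `B' = (B \ H_A) ∪ {1}`: every
non-identity `a ∈ A'` satisfies `a⁻¹ ∈ B'`. -/
theorem inv_mem_Bprime_of_mem_Aprime {G : Type*} [Group G] (A B : Subsemigroup G)
    (hA : (A : Set G) ≠ Set.univ) (hB : (B : Set G) ≠ Set.univ)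
    (hunion : (A : Set G) ∪ (B : Set G) = Set.univ)
    (hinter : (A : Set G) ∩ (B : Set G) = {1})
    (hinv : ∀ a ∈ A, a ≠ 1 → a⁻¹ ∈ B ∧ a⁻¹ ∉ A)
    (g : G) :
    ∀ a ∈ (A : Set G) ∪ {h : G | (h ∈ B ∧ h⁻¹ ∈ B) ∧ g⁻¹ * h * g ∈ A}, a ≠ 1 →
      a⁻¹ ∈ ((B : Set G) \ {h : G | (h ∈ B ∧ h⁻¹ ∈ B) ∧ g⁻¹ * h * g ∈ A}) ∪ {1} := by
  rintro a (ha | ⟨⟨haB, haiB⟩, hag⟩) hne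
  · obtain ⟨hiB, hiA⟩ := hinv a ha hne
    left
    refine ⟨hiB, fun ⟨⟨_, hiiB⟩, _⟩ => ?_⟩
    rw [inv_inv] at hiiB
    have : a ∈ ({1} : Set G) := hinter ▸ ⟨ha, hiiB⟩
    exact hne this
  · left
    refine ⟨haiB, fun ⟨_, hig⟩ => ?_⟩
    have hne' : g⁻¹ * a * g ≠ 1 := by
      intro h
      apply hne
      have := congrArg (fun x => g * x * g⁻¹) h
      simpa [mul_assoc] using this
    have := (hinv _ hag hne').2
    apply this
    simpa [mul_assoc] using hig
end

section
/- Let G be a group and A, B proper subsemigroups of G with A ∪ B = G, A ∩ B = {1}, and such that A contains no nontrivial subgroup (i.e., for all a ∈ A, if a⁻¹ ∈ A then a = 1). Let 𝓕 be the family of pairs (U, V) of proper subsemigroups of G such that U ∪ V = G, U ∩ V = {1}, A ⊆ U, V ⊆ B, and U contains no nontrivial subgroup. Then 𝓕 has a minimal element with respect to the order (U₁,V₁) ≤ (U₂,V₂) ⟺ V₁ ⊆ V₂: there exists (U, V) ∈ 𝓕 such that every (U', V') ∈ 𝓕 with V' ⊆ V satisfies V' = V. -/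
/-- The family `𝓕` of pairs `(U, V)` of proper subsemigroups of `G` such that
`U ∪ V = G`, `U ∩ V = {1}`, `A ⊆ U`, `V ⊆ B`, and `U` contains no nontrivial subgroup. -/
def GoodPair {G : Type*} [Group G] (A B U V : Subsemigroup G) : Prop :=
  (U : Set G) ≠ Set.univ ∧ (V : Set G) ≠ Set.univ ∧
    (U : Set G) ∪ (V : Set G) = Set.univ ∧ (U : Set G) ∩ (V : Set G) = {1} ∧
    (A : Set G) ⊆ (U : Set G) ∧ (V : Set G) ⊆ (B : Set G) ∧
    ∀ u ∈ U, u⁻¹ ∈ U → u = 1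

/-- **Lemma 2.10.** Let `G = A ∪ B` with `A`, `B` proper subsemigroups,
`A ∩ B = {1}`, and `A` containing no nontrivial subgroup. Then the family `𝓕` ordered by
`(U₁,V₁) ≤ (U₂,V₂) ↔ V₁ ⊆ V₂` has a minimal element. -/
theorem exists_minimal_goodPair {G : Type*} [Group G] (A B : Subsemigroup G)
    (hA : (A : Set G) ≠ Set.univ) (hB : (B : Set G) ≠ Set.univ)
    (hunion : (A : Set G) ∪ (B : Set G) = Set.univ)
    (hinter : (A : Set G) ∩ (B : Set G) = {1})
    (hnosub : ∀ a ∈ A, a⁻¹ ∈ A → a = 1) :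
    ∃ U V : Subsemigroup G, GoodPair A B U V ∧
      ∀ U' V' : Subsemigroup G, GoodPair A B U' V' → (V' : Set G) ⊆ (V : Set G) →
        V' = V := by
  have h1A : (1 : G) ∈ A := by
    have h : (1 : G) ∈ ((A : Set G) ∩ (B : Set G)) := by rw [hinter]; rfl
    exact h.1
  -- there is a nontrivial element of G
  obtain ⟨g₀, hg₀A⟩ : ∃ g, g ∉ (A : Set G) := by
    by_contra h
    push_neg at h
    exact hA (Set.eq_univ_of_forall h)
  have hg₀ : g₀ ≠ 1 := fun h => hg₀A (h ▸ h1A)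
  set S : Set (Set G) := {s | ∃ U V : Subsemigroup G, GoodPair A B U V ∧ (V : Set G) = s}
    with hSdef
  have hBS : (B : Set G) ∈ S :=
    ⟨A, B, ⟨hA, hB, hunion, hinter, subset_rfl, subset_rfl, hnosub⟩, rfl⟩
  have key : ∀ c ⊆ S, IsChain (· ⊆ ·) c → c.Nonempty → ∃ lb ∈ S, ∀ s ∈ c, lb ⊆ s := by
    intro c hcS hchain hcne
    obtain ⟨s₀, hs₀⟩ := hcne
    choose Uf Vf hgood hcoe using fun s (hs : s ∈ c) => hcS hs
    set I : Set G := ⋂₀ c with hI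
    have hIsub : ∀ s ∈ c, I ⊆ s := fun s hs => Set.sInter_subset_of_mem hs
    -- basic facts from goodness
    have h1s : ∀ s ∈ c, (1 : G) ∈ s := by
      intro s hs
      obtain ⟨-, -, -, hin, -, -, -⟩ := hgood s hs
      have h : (1 : G) ∈ ((Uf s hs : Set G) ∩ (Vf s hs : Set G)) := by rw [hin]; rfl
      rw [hcoe s hs] at h
      exact h.2
    have hcompl : ∀ s (hs : s ∈ c), ∀ x, x ∉ s → x ∈ Uf s hs := by
      intro s hs x hx
      obtain ⟨-, -, hun, -, -, -, -⟩ := hgood s hs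
      have : x ∈ ((Uf s hs : Set G) ∪ (Vf s hs : Set G)) := by rw [hun]; trivial
      rcases this with h | h
      · exact h
      · rw [hcoe s hs] at h; exact absurd h hx
    have hinterUs : ∀ s (hs : s ∈ c), ∀ x, x ∈ Uf s hs → x ∈ s → x = 1 := by
      intro s hs x hxU hxs
      obtain ⟨-, -, -, hin, -, -, -⟩ := hgood s hs
      have : x ∈ ((Uf s hs : Set G) ∩ (Vf s hs : Set G)) := ⟨hxU, by rw [hcoe s hs]; exact hxs⟩
      rw [hin] at this
      exact this
    have h1I : (1 : G) ∈ I := Set.mem_sInter.2 h1s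
    -- for any two elements outside I there is a common s ∈ c missing both
    have hcommon : ∀ x y : G, x ∉ I → y ∉ I → ∃ s ∈ c, x ∉ s ∧ y ∉ s := by
      intro x y hx hy
      obtain ⟨s₁, hs₁c, hxs₁⟩ : ∃ s ∈ c, x ∉ s := by
        by_contra h; push_neg at h; exact hx (Set.mem_sInter.2 h)
      obtain ⟨s₂, hs₂c, hys₂⟩ : ∃ s ∈ c, y ∉ s := by
        by_contra h; push_neg at h; exact hy (Set.mem_sInter.2 h)
      rcases eq_or_ne s₁ s₂ with rfl | hne
      · exact ⟨s₁, hs₁c, hxs₁, hys₂⟩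
      · rcases hchain hs₁c hs₂c hne with h | h
        · exact ⟨s₁, hs₁c, hxs₁, fun hy' => hys₂ (h hy')⟩
        · exact ⟨s₂, hs₂c, fun hx' => hxs₁ (h hx'), hys₂⟩
    -- the lower-bound pair
    set Vlb : Subsemigroup G :=
      { carrier := I
        mul_mem' := by
          intro a b ha hb
          refine Set.mem_sInter.2 fun s hs => ?_
          rw [← hcoe s hs] at *
          exact mul_mem (Set.mem_sInter.1 ha _ hs) (Set.mem_sInter.1 hb _ hs) }
      with hVlb
    set Ulb : Subsemigroup G :=
      { carrier := Iᶜ ∪ {1}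
        mul_mem' := by
          intro a b ha hb
          rcases hb with hb | hb
          swap
          · rcases ha with ha | ha
            · simp only [Set.mem_singleton_iff] at hb
              subst hb; exact Or.inl (by simpa using ha)
            · simp only [Set.mem_singleton_iff] at ha hb; subst ha; subst hb
              right; simp
          rcases ha with ha | ha
          swap
          · simp only [Set.mem_singleton_iff] at ha; subst ha
            exact Or.inl (by simpa using hb)
          -- a, b both outside I
          obtain ⟨s, hsc, has, hbs⟩ := hcommon a b ha hb
          have haU : a ∈ Uf s hsc := hcompl s hsc a has
          have hbU : b ∈ Uf s hsc := hcompl s hsc b hbs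
          have habU : a * b ∈ Uf s hsc := mul_mem haU hbU
          by_cases hab : a * b ∈ I
          · right
            exact hinterUs s hsc _ habU (hIsub s hsc hab)
          · exact Or.inl hab }
      with hUlb
    have hUlbCoe : (Ulb : Set G) = Iᶜ ∪ {1} := rfl
    have hVlbCoe : (Vlb : Set G) = I := rfl
    have hIB : I ⊆ (B : Set G) := by
      intro x hx
      have hxs₀ : x ∈ s₀ := hIsub s₀ hs₀ hx
      obtain ⟨-, -, -, -, -, hVB, -⟩ := hgood s₀ hs₀
      exact hVB (by rw [hcoe s₀ hs₀]; exact hxs₀)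
    have hnosubU : ∀ u ∈ Ulb, u⁻¹ ∈ Ulb → u = 1 := by
      intro u hu hui
      by_contra hne
      have hui1 : u⁻¹ ≠ 1 := fun h => hne (by simpa using congrArg (·⁻¹) h)
      have hu' : u ∉ I := by
        rcases hu with h | h
        · exact h
        · exact absurd h hne
      have hui' : u⁻¹ ∉ I := by
        rcases hui with h | h
        · exact h
        · exact absurd h hui1
      obtain ⟨s, hsc, hus, huis⟩ := hcommon u u⁻¹ hu' hui'
      obtain ⟨-, -, -, -, -, -, hns⟩ := hgood s hsc
      exact hne (hns u (hcompl s hsc u hus) (hcompl s hsc u⁻¹ huis))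
    refine ⟨I, ⟨Ulb, Vlb, ⟨?_, ?_, ?_, ?_, ?_, ?_, hnosubU⟩, rfl⟩, fun s hs => hIsub s hs⟩
    · -- Ulb proper
      intro h
      have hg : g₀ ∈ Ulb := by rw [← SetLike.mem_coe, h]; trivial
      have hgi : g₀⁻¹ ∈ Ulb := by rw [← SetLike.mem_coe, h]; trivial
      exact hg₀ (hnosubU g₀ hg hgi)
    · -- Vlb proper
      intro h
      exact hB (Set.univ_subset_iff.1 (h ▸ hIB))
    · -- union
      rw [hUlbCoe, hVlbCoe]
      ext x
      simp only [Set.mem_union, Set.mem_compl_iff, Set.mem_univ, iff_true]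
      by_cases hx : x ∈ I
      · exact Or.inr hx
      · exact Or.inl (Or.inl hx)
    · -- intersection
      rw [hUlbCoe, hVlbCoe]
      ext x
      constructor
      · rintro ⟨hU, hV⟩
        rcases hU with h | h
        · exact absurd hV h
        · exact h
      · rintro rfl
        exact ⟨Or.inr rfl, h1I⟩
    · -- A ⊆ Ulb
      intro a ha
      by_cases ha1 : a = 1
      · exact Or.inr ha1
      · left
        intro haI
        obtain ⟨-, -, -, -, hAU, -, -⟩ := hgood s₀ hs₀
        exact ha1 (hinterUs s₀ hs₀ a (hAU ha) (hIsub s₀ hs₀ haI))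
    · -- Vlb ⊆ B
      exact hIB
  obtain ⟨m, -, hmmin⟩ := zorn_superset_nonempty S key _ hBS
  obtain ⟨⟨U, V, hgood, rfl⟩, hmin⟩ := hmmin
  refine ⟨U, V, hgood, fun U' V' hg' hsub => ?_⟩
  have : (V : Set G) ⊆ (V' : Set G) := hmin ⟨U', V', hg', rfl⟩ hsub
  exact SetLike.coe_injective (hsub.antisymm this)
end

section
/- Let G be a group and A, B proper subsemigroups of G with A ∪ B = G, A ∩ B = {1}, such that for every a ∈ A with a ≠ 1 one has a⁻¹ ∈ B and a⁻¹ ∉ A. Let 𝓕 be the family of pairs (U, V) of proper subsemigroups of G such that U ∪ V = G, U ∩ V = {1}, A ⊆ U, V ⊆ B, and U contains no nontrivial subgroup (for all u ∈ U, if u⁻¹ ∈ U then u = 1). If (U, V) is a minimal element of 𝓕 (every (U', V') ∈ 𝓕 with V' ⊆ V satisfies V' = V), then the set N = {h ∈ V | h⁻¹ ∈ V} is a normal subgroup of G: it is a subgroup and g·N·g⁻¹ = N for all g ∈ G. -/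
/-- **Lemma 2.11.** Let `G = A ∪ B` with `A`, `B` proper subsemigroups,
`A ∩ B = {1}`, and every non-identity `a ∈ A` having `a⁻¹ ∈ B` and `a⁻¹ ∉ A`. If `(U, V)`
is a minimal element of `𝓕`, then `N = {h ∈ V | h⁻¹ ∈ V}` is a normal subgroup of `G`. -/
theorem maxSubgroup_of_minimal_goodPair_normal {G : Type*} [Group G] (A B : Subsemigroup G)
    (hA : (A : Set G) ≠ Set.univ) (hB : (B : Set G) ≠ Set.univ)
    (hunion : (A : Set G) ∪ (B : Set G) = Set.univ)
    (hinter : (A : Set G) ∩ (B : Set G) = {1})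
    (hinv : ∀ a ∈ A, a ≠ 1 → a⁻¹ ∈ B ∧ a⁻¹ ∉ A)
    (U V : Subsemigroup G) (hUV : GoodPair A B U V)
    (hmin : ∀ U' V' : Subsemigroup G, GoodPair A B U' V' → (V' : Set G) ⊆ (V : Set G) →
      V' = V) :
    ∃ N : Subgroup G, (N : Set G) = {h : G | h ∈ V ∧ h⁻¹ ∈ V} ∧ N.Normal := by
  obtain ⟨hU_ne, hV_ne, hUn, hUi, hAU, hVB, hcone⟩ := hUV
  have h1UV : (1 : G) ∈ (U : Set G) ∩ (V : Set G) := by rw [hUi]; rfl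
  have h1U : (1 : G) ∈ U := h1UV.1
  have h1V : (1 : G) ∈ V := h1UV.2
  have hmemV : ∀ x : G, x ∉ U → x ∈ V := by
    intro x hx
    have hx2 : x ∈ (U : Set G) ∪ (V : Set G) := by rw [hUn]; trivial
    rcases hx2 with h | h
    · exact absurd h hx
    · exact h
  have hboth : ∀ x : G, x ∈ U → x ∈ V → x = 1 := by
    intro x h1 h2
    have : x ∈ ((U : Set G) ∩ (V : Set G)) := ⟨h1, h2⟩
    rw [hUi] at this; exact this
  have hinvV : ∀ x : G, x ∈ U → x ≠ 1 → x⁻¹ ∈ V := by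
    intro x hx hne
    refine hmemV _ fun h => hne (hcone x hx h)
  -- Key lemma: a nontrivial conjugate of an element of N cannot lie in U.
  have key : ∀ g x : G, x ∈ V → x⁻¹ ∈ V → g * x * g⁻¹ ∈ U → g * x * g⁻¹ = 1 := by
    intro g x hxV hxiV hxU
    by_contra hne
    classical
    set T : Set G := {y : G | y ∈ V ∧ y⁻¹ ∈ V ∧ g * y * g⁻¹ ∈ U ∧ g * y * g⁻¹ ≠ 1} with hT
    have hxT : x ∈ T := ⟨hxV, hxiV, hxU, hne⟩
    have hT1 : (1 : G) ∉ T := by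
      rintro ⟨-, -, -, h4⟩
      exact h4 (by group)
    have hTne1 : ∀ y ∈ T, y ≠ 1 := fun y hy h => hT1 (h ▸ hy)
    -- conjugate of the product
    have hconjmul : ∀ a b : G, g * (a * b) * g⁻¹ = (g * a * g⁻¹) * (g * b * g⁻¹) := by
      intro a b; group
    -- U·T ⊆ U for nontrivial left factor; in general U·T ⊆ U ∪ T, etc.
    have hUT : ∀ a b : G, a ∈ U → b ∈ T → a * b ∈ (U : Set G) ∪ T := by
      intro a b ha hb
      by_cases ha1 : a = 1
      · subst ha1; simpa using Or.inr hb
      left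
      by_contra habU
      have habV : a * b ∈ V := hmemV _ habU
      have hb' := hb
      obtain ⟨hbV, hbiV, -, -⟩ := hb'
      have : a = (a * b) * b⁻¹ := by group
      have haV : a ∈ V := by rw [this]; exact V.mul_mem habV hbiV
      exact ha1 (hboth a ha haV)
    have hTU : ∀ a b : G, a ∈ T → b ∈ U → a * b ∈ (U : Set G) ∪ T := by
      intro a b ha hb
      by_cases hb1 : b = 1
      · subst hb1; simpa using Or.inr ha
      left
      by_contra habU
      have habV : a * b ∈ V := hmemV _ habU
      obtain ⟨haV, haiV, -, -⟩ := ha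
      have : b = a⁻¹ * (a * b) := by group
      have hbV : b ∈ V := by rw [this]; exact V.mul_mem haiV habV
      exact hb1 (hboth b hb hbV)
    have hTT : ∀ a b : G, a ∈ T → b ∈ T → a * b ∈ T := by
      intro a b ⟨haV, haiV, haU, hane⟩ ⟨hbV, hbiV, hbU, hbne⟩
      refine ⟨V.mul_mem haV hbV, ?_, ?_, ?_⟩
      · rw [mul_inv_rev]; exact V.mul_mem hbiV haiV
      · rw [hconjmul]; exact U.mul_mem haU hbU
      · rw [hconjmul]
        intro h
        have hinvb : (g * a * g⁻¹)⁻¹ ∈ U := by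
          rw [inv_eq_of_mul_eq_one_right h]; exact hbU
        exact hane (hcone _ haU hinvb)
    -- the enlarged U
    set U' : Subsemigroup G :=
      { carrier := (U : Set G) ∪ T
        mul_mem' := by
          rintro a b (ha | ha) (hb | hb)
          · exact Or.inl (U.mul_mem ha hb)
          · exact hUT a b ha hb
          · exact hTU a b ha hb
          · exact Or.inr (hTT a b ha hb) } with hU'
    -- the shrunken V
    set V' : Subsemigroup G :=
      { carrier := {v : G | v ∈ V ∧ v ∉ T}
        mul_mem' := by
          rintro a b ⟨haV, haT⟩ ⟨hbV, hbT⟩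
          refine ⟨V.mul_mem haV hbV, ?_⟩
          rintro ⟨habV, habiV, habU, habne⟩
          by_cases haiV : a⁻¹ ∈ V
          · by_cases hbiV : b⁻¹ ∈ V
            · -- both conjugates land in V, so the product conjugate is in V, contradiction
              have hgaV : g * a * g⁻¹ ∈ V := by
                by_cases h : g * a * g⁻¹ ∈ U
                · by_cases h1 : g * a * g⁻¹ = 1
                  · rw [h1]; exact h1V
                  · exact absurd ⟨haV, haiV, h, h1⟩ haT
                · exact hmemV _ h
              have hgbV : g * b * g⁻¹ ∈ V := by
                by_cases h : g * b * g⁻¹ ∈ U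
                · by_cases h1 : g * b * g⁻¹ = 1
                  · rw [h1]; exact h1V
                  · exact absurd ⟨hbV, hbiV, h, h1⟩ hbT
                · exact hmemV _ h
              have : g * (a * b) * g⁻¹ ∈ V := by
                rw [hconjmul]; exact V.mul_mem hgaV hgbV
              exact habne (hboth _ habU this)
            ·
              have : b⁻¹ = (a * b)⁻¹ * a := by group
              exact hbiV (this ▸ V.mul_mem habiV haV)
          · have : a⁻¹ = b * (a * b)⁻¹ := by group
            exact haiV (this ▸ V.mul_mem hbV habiV) } with hV'
    -- U is nontrivial (otherwise V = univ)
    have hUnontriv : ∃ u : G, u ∈ U ∧ u ≠ 1 := by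
      by_contra h
      push_neg at h
      apply hV_ne
      ext z
      simp only [Set.mem_univ, iff_true]
      by_cases hz : z ∈ U
      · rw [h z hz]; exact h1V
      · exact hmemV z hz
    obtain ⟨u₀, hu₀U, hu₀ne⟩ := hUnontriv
    have hgood : GoodPair A B U' V' := by
      refine ⟨?_, ?_, ?_, ?_, ?_, ?_, ?_⟩
      · -- U' proper: u₀⁻¹ ∉ U'
        intro h
        have hmem : u₀⁻¹ ∈ (U : Set G) ∪ T := by
          have : u₀⁻¹ ∈ (U' : Set G) := by rw [h]; trivial
          exact this
        rcases hmem with h' | h'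
        · exact hu₀ne (hcone u₀ hu₀U h')
        · obtain ⟨-, h2, -, -⟩ := h'
          rw [inv_inv] at h2
          exact hu₀ne (hboth _ hu₀U h2)
      · -- V' proper
        intro h
        apply hV_ne
        ext z
        simp only [Set.mem_univ, iff_true]
        have : z ∈ (V' : Set G) := by rw [h]; trivial
        exact this.1
      · -- union
        ext z
        simp only [Set.mem_univ, iff_true]
        by_cases hz : z ∈ U
        · exact Or.inl (Or.inl hz)
        · by_cases hzT : z ∈ T
          · exact Or.inl (Or.inr hzT)
          · exact Or.inr ⟨hmemV z hz, hzT⟩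
      · -- intersection
        ext z
        constructor
        · rintro ⟨hz1, hz2, hz3⟩
          rcases hz1 with h | h
          · exact hboth z h hz2
          · exact absurd h hz3
        · rintro rfl
          exact ⟨Or.inl h1U, h1V, hT1⟩
      · exact fun a ha => Or.inl (hAU ha)
      · exact fun v hv => hVB hv.1
      · -- cone condition
        rintro z (hz | hz) (hzi | hzi)
        · exact hcone z hz hzi
        · obtain ⟨-, h2, -, -⟩ := hzi
          rw [inv_inv] at h2
          exact hboth z hz h2
        · have h1 : z⁻¹ = 1 := hboth _ hzi hz.2.1
          exact inv_eq_one.mp h1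
        · obtain ⟨-, -, h3, h4⟩ := hz
          obtain ⟨-, -, h3', -⟩ := hzi
          have : (g * z * g⁻¹)⁻¹ ∈ U := by
            have he : (g * z * g⁻¹)⁻¹ = g * z⁻¹ * g⁻¹ := by group
            rw [he]; exact h3'
          exact absurd (hcone _ h3 this) h4
    have hVeq := hmin U' V' hgood (fun v hv => hv.1)
    have hxV' : x ∈ V' := by rw [hVeq]; exact hxV
    exact hxV'.2 hxT
  -- Build the subgroup N
  refine ⟨{ carrier := {h : G | h ∈ V ∧ h⁻¹ ∈ V}
            one_mem' := ⟨h1V, by simpa using h1V⟩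
            mul_mem' := by
              rintro a b ⟨haV, haiV⟩ ⟨hbV, hbiV⟩
              exact ⟨V.mul_mem haV hbV, by rw [mul_inv_rev]; exact V.mul_mem hbiV haiV⟩
            inv_mem' := by
              rintro a ⟨haV, haiV⟩
              exact ⟨haiV, by simpa using haV⟩ }, rfl, ?_⟩
  constructor
  rintro n ⟨hnV, hniV⟩ g
  constructor
  · by_cases h : g * n * g⁻¹ ∈ U
    · rw [key g n hnV hniV h]; exact h1V
    · exact hmemV _ h
  · have he : (g * n * g⁻¹)⁻¹ = g * n⁻¹ * g⁻¹ := by group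
    rw [he]
    by_cases h : g * n⁻¹ * g⁻¹ ∈ U
    · rw [key g n⁻¹ hniV (by simpa using hnV) h]; exact h1V
    · exact hmemV _ h
end

section
/- Let G be a group that is the union of two proper subsemigroups. Then there exists a minimum normal subgroup N of G such that G/N is nontrivial and left-orderable: G/N is nontrivial and left-orderable, and for every normal subgroup M of G with G/M nontrivial and left-orderable, N ≤ M. -/
lemma lemA {G : Type*} [Group G] (D : Set G)
    (hmul : ∀ a ∈ D, ∀ b ∈ D, a * b ∈ D)
    (htot : ∀ g : G, g ∈ D ∨ g⁻¹ ∈ D)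
    (K : Subgroup G) (hKD : ∀ g : G, g ∈ K ↔ g ∈ D ∧ g⁻¹ ∈ D)
    (hKn : K.Normal) (hKt : K ≠ ⊤) :
    Nontrivial (G ⧸ K) ∧
      @IsLeftOrderable (G ⧸ K) (@QuotientGroup.Quotient.group G _ K hKn) := by
  classical
  haveI := hKn
  have h1D : (1 : G) ∈ D := by
    rcases htot 1 with h | h
    · exact h
    · simpa using h
  have hKsubD : ∀ k : G, k ∈ K → k ∈ D := fun k hk => ((hKD k).1 hk).1
  constructor
  · -- nontrivial
    obtain ⟨g, hg⟩ : ∃ g : G, g ∉ K := by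
      by_contra h
      push_neg at h
      exact hKt ((Subgroup.eq_top_iff' K).mpr h)
    refine ⟨QuotientGroup.mk g, 1, ?_⟩
    simpa [QuotientGroup.eq_one_iff] using hg
  · -- left orderable
    set le : G ⧸ K → G ⧸ K → Prop := fun a b => (Quotient.out a)⁻¹ * Quotient.out b ∈ D with hle
    have hrefl : ∀ a, le a a := by intro a; simpa [hle] using h1D
    have htrans : ∀ a b c, le a b → le b c → le a c := by
      intro a b c hab hbc
      have := hmul _ hab _ hbc
      simpa [hle, mul_assoc] using this
    have hanti : ∀ a b, le a b → le b a → a = b := by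
      intro a b hab hba
      have : (Quotient.out a)⁻¹ * Quotient.out b ∈ K := by
        refine (hKD _).2 ⟨hab, ?_⟩
        simpa [mul_inv_rev] using hba
      have h2 : (QuotientGroup.mk (Quotient.out a) : G ⧸ K) = QuotientGroup.mk (Quotient.out b) :=
        QuotientGroup.eq.mpr this
      rwa [QuotientGroup.out_eq', QuotientGroup.out_eq'] at h2
    have htotal : ∀ a b, le a b ∨ le b a := by
      intro a b
      rcases htot ((Quotient.out a)⁻¹ * Quotient.out b) with h | h
      · exact Or.inl h
      · right; simpa [hle, mul_inv_rev] using h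
    have hinv : ∀ a b c, le a b → le (c * a) (c * b) := by
      intro a b c hab
      have e1 : ((c * a).out)⁻¹ * (c.out * a.out) ∈ K := by
        refine QuotientGroup.eq.mp ?_
        rw [QuotientGroup.out_eq', QuotientGroup.mk_mul, QuotientGroup.out_eq',
          QuotientGroup.out_eq']
      have e2 : (c.out * b.out)⁻¹ * ((c * b).out) ∈ K := by
        refine QuotientGroup.eq.mp ?_
        rw [QuotientGroup.out_eq', QuotientGroup.mk_mul, QuotientGroup.out_eq',
          QuotientGroup.out_eq']
      have key : ((c * a).out)⁻¹ * ((c * b).out) =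
          (((c * a).out)⁻¹ * (c.out * a.out)) * ((a.out⁻¹ * b.out) *
            ((c.out * b.out)⁻¹ * ((c * b).out))) := by
        group
      show ((c * a).out)⁻¹ * ((c * b).out) ∈ D
      rw [key]
      exact hmul _ (hKsubD _ e1) _ (hmul _ hab _ (hKsubD _ e2))
    refine ⟨{ le := le
              le_refl := hrefl
              le_trans := htrans
              le_antisymm := hanti
              le_total := htotal
              toDecidableLE := fun a b => Classical.propDecidable _ }, ?_⟩
    intro a b c h
    exact hinv a b c h

lemma lemB {G : Type*} [Group G] {ι : Type*} (P : ι → Set G)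
    (hmul : ∀ i, ∀ a ∈ P i, ∀ b ∈ P i, a * b ∈ P i)
    (htot : ∀ i, ∀ g : G, g ∈ P i ∨ g⁻¹ ∈ P i) :
    ∃ D : Set G, (∀ a ∈ D, ∀ b ∈ D, a * b ∈ D) ∧ (∀ g : G, g ∈ D ∨ g⁻¹ ∈ D) ∧
      (∀ g : G, (g ∈ D ∧ g⁻¹ ∈ D) ↔ ∀ i, g ∈ P i ∧ g⁻¹ ∈ P i) := by
  classical
  set r : ι → ι → Prop := WellOrderingRel with hr
  haveI : IsWellOrder ι r := WellOrderingRel.isWellOrder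
  set H : ι → Set G := fun i => {g | g ∈ P i ∧ g⁻¹ ∈ P i} with hH
  -- basic facts about H
  have hHinv : ∀ i (g : G), g ∈ H i ↔ g⁻¹ ∈ H i := by
    intro i g
    constructor
    · rintro ⟨h1, h2⟩; exact ⟨h2, by simpa using h1⟩
    · rintro ⟨h1, h2⟩; exact ⟨by simpa using h2, h1⟩
  have hHmul : ∀ i, ∀ a ∈ H i, ∀ b ∈ H i, a * b ∈ H i := by
    rintro i a ⟨ha1, ha2⟩ b ⟨hb1, hb2⟩
    refine ⟨hmul i a ha1 b hb1, ?_⟩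
    rw [mul_inv_rev]
    exact hmul i _ hb2 _ ha2
  have hPP : ∀ i, ∀ a, a ∈ P i → a ∉ H i → ∀ b, b ∈ P i → b ∉ H i →
      a * b ∈ P i ∧ a * b ∉ H i := by
    intro i a ha ha' b hb hb'
    refine ⟨hmul i a ha b hb, ?_⟩
    rintro ⟨-, habinv⟩
    rw [mul_inv_rev] at habinv
    have : a⁻¹ ∈ P i := by
      have := hmul i b hb _ habinv
      rwa [← mul_assoc, mul_inv_cancel, one_mul] at this
    exact ha' ⟨ha, this⟩
  have hHP : ∀ i, ∀ a ∈ H i, ∀ b, b ∈ P i → b ∉ H i → a * b ∈ P i ∧ a * b ∉ H i := by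
    rintro i a ⟨ha1, ha2⟩ b hb hb'
    refine ⟨hmul i a ha1 b hb, ?_⟩
    rintro ⟨-, habinv⟩
    rw [mul_inv_rev] at habinv
    have : b⁻¹ ∈ P i := by
      have := hmul i _ habinv a ha1
      rwa [mul_assoc, inv_mul_cancel, mul_one] at this
    exact hb' ⟨hb, this⟩
  have hPH : ∀ i, ∀ a, a ∈ P i → a ∉ H i → ∀ b ∈ H i, a * b ∈ P i ∧ a * b ∉ H i := by
    rintro i a ha ha' b ⟨hb1, hb2⟩
    refine ⟨hmul i a ha b hb1, ?_⟩
    rintro ⟨-, habinv⟩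
    rw [mul_inv_rev] at habinv
    have : a⁻¹ ∈ P i := by
      have := hmul i b hb1 _ habinv
      rwa [← mul_assoc, mul_inv_cancel, one_mul] at this
    exact ha' ⟨ha, this⟩
  -- the set D
  set D : Set G := {g | (∀ i, g ∈ H i) ∨
      ∃ i, g ∉ H i ∧ (∀ j, r j i → g ∈ H j) ∧ g ∈ P i} with hD
  -- uniqueness of witnesses
  have hwit : ∀ (g : G) (i i' : ι), g ∉ H i → (∀ j, r j i → g ∈ H j) →
      g ∉ H i' → (∀ j, r j i' → g ∈ H j) → i = i' := by
    intro g i i' h1 h2 h3 h4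
    rcases trichotomous_of r i i' with h | h | h
    · exact absurd (h4 i h) h1
    · exact h
    · exact absurd (h2 i' h) h3
  refine ⟨D, ?_, ?_, ?_⟩
  · -- multiplication
    rintro a (ha | ⟨i₁, hi₁, hmin₁, hP₁⟩) b hb
    · rcases hb with hb | ⟨i₂, hi₂, hmin₂, hP₂⟩
      · exact Or.inl fun i => hHmul i a (ha i) b (hb i)
      · refine Or.inr ⟨i₂, ?_, ?_, ?_⟩
        · exact (hHP i₂ a (ha i₂) b hP₂ hi₂).2
        · exact fun j hj => hHmul j a (ha j) b (hmin₂ j hj)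
        · exact (hHP i₂ a (ha i₂) b hP₂ hi₂).1
    · rcases hb with hb | ⟨i₂, hi₂, hmin₂, hP₂⟩
      · refine Or.inr ⟨i₁, ?_, ?_, ?_⟩
        · exact (hPH i₁ a hP₁ hi₁ b (hb i₁)).2
        · exact fun j hj => hHmul j a (hmin₁ j hj) b (hb j)
        · exact (hPH i₁ a hP₁ hi₁ b (hb i₁)).1
      · rcases trichotomous_of r i₁ i₂ with hlt | heq | hlt
        · -- i₁ < i₂ : witness i₁, b ∈ H i₁
          have hbH : b ∈ H i₁ := hmin₂ i₁ hlt
          refine Or.inr ⟨i₁, (hPH i₁ a hP₁ hi₁ b hbH).2, ?_, (hPH i₁ a hP₁ hi₁ b hbH).1⟩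
          intro j hj
          exact hHmul j a (hmin₁ j hj) b (hmin₂ j (_root_.trans hj hlt))
        · subst heq
          refine Or.inr ⟨i₁, (hPP i₁ a hP₁ hi₁ b hP₂ hi₂).2, ?_,
            (hPP i₁ a hP₁ hi₁ b hP₂ hi₂).1⟩
          intro j hj
          exact hHmul j a (hmin₁ j hj) b (hmin₂ j hj)
        · -- i₂ < i₁ : witness i₂, a ∈ H i₂
          have haH : a ∈ H i₂ := hmin₁ i₂ hlt
          refine Or.inr ⟨i₂, (hHP i₂ a haH b hP₂ hi₂).2, ?_, (hHP i₂ a haH b hP₂ hi₂).1⟩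
          intro j hj
          exact hHmul j a (hmin₁ j (_root_.trans hj hlt)) b (hmin₂ j hj)
  · -- totality
    intro g
    by_cases hg : ∀ i, g ∈ H i
    · exact Or.inl (Or.inl hg)
    · push_neg at hg
      have hne : {i | g ∉ H i}.Nonempty := hg
      obtain ⟨i₀, hi₀, hmin⟩ := (IsWellFounded.wf (r := r)).has_min _ hne
      have hminH : ∀ j, r j i₀ → g ∈ H j := by
        intro j hj
        by_contra hjH
        exact hmin j hjH hj
      rcases htot i₀ g with h | h
      · exact Or.inl (Or.inr ⟨i₀, hi₀, hminH, h⟩)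
      · refine Or.inr (Or.inr ⟨i₀, ?_, ?_, h⟩)
        · intro hc; exact hi₀ ((hHinv i₀ g).2 hc)
        · intro j hj; exact (hHinv j g).1 (hminH j hj)
  · -- kernel characterization
    intro g
    constructor
    · rintro ⟨hg, hginv⟩
      rcases hg with h | ⟨i₁, hi₁, hmin₁, hP₁⟩
      · rcases hginv with h' | ⟨i₂, hi₂, hmin₂, hP₂⟩
        · exact fun i => ⟨(h i).1, (h i).2⟩
        · exact absurd ((hHinv i₂ g).1 (h i₂)) hi₂
      · rcases hginv with h' | ⟨i₂, hi₂, hmin₂, hP₂⟩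
        · refine absurd ?_ hi₁
          have hh := (hHinv i₁ g⁻¹).1 (h' i₁)
          rwa [inv_inv] at hh
        · have : i₁ = i₂ := by
            refine hwit g i₁ i₂ hi₁ hmin₁ ?_ ?_
            · intro hc2; exact hi₂ ((hHinv i₂ g).1 hc2)
            · intro j hj
              have h := (hHinv j g⁻¹).1 (hmin₂ j hj)
              rwa [inv_inv] at h
          subst this
          exact absurd ⟨hP₁, hP₂⟩ hi₁
    · intro hall
      refine ⟨Or.inl hall, Or.inl fun i => (hHinv i g).1 (hall i)⟩

lemma cone_of_LO {G : Type*} [Group G] (M : Subgroup G) (hM : M.Normal)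
    (hlo : @IsLeftOrderable (G ⧸ M) (@QuotientGroup.Quotient.group G _ M hM)) :
    ∃ P : Set G, (∀ a ∈ P, ∀ b ∈ P, a * b ∈ P) ∧ (∀ g : G, g ∈ P ∨ g⁻¹ ∈ P) ∧
      (∀ g : G, (g ∈ P ∧ g⁻¹ ∈ P) ↔ g ∈ M) := by
  haveI := hM
  obtain ⟨r, hr⟩ := hlo
  letI := r
  have hinvle : ∀ q : G ⧸ M, q ≤ 1 → 1 ≤ q⁻¹ := by
    intro q hq
    have := hr q 1 q⁻¹ hq
    rwa [inv_mul_cancel, mul_one] at this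
  refine ⟨{g | (1 : G ⧸ M) ≤ QuotientGroup.mk g}, ?_, ?_, ?_⟩
  · intro a ha b hb
    have h2 : (QuotientGroup.mk a : G ⧸ M) ≤ QuotientGroup.mk a * QuotientGroup.mk b := by
      have := hr 1 (QuotientGroup.mk b) (QuotientGroup.mk a) hb
      rwa [mul_one] at this
    show (1 : G ⧸ M) ≤ QuotientGroup.mk (a * b)
    rw [QuotientGroup.mk_mul]
    exact le_trans ha h2
  · intro g
    rcases le_total (1 : G ⧸ M) (QuotientGroup.mk g) with h | h
    · exact Or.inl h
    · right
      show (1 : G ⧸ M) ≤ QuotientGroup.mk g⁻¹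
      rw [QuotientGroup.mk_inv]
      exact hinvle _ h
  · intro g
    constructor
    · rintro ⟨h1, h2⟩
      have h2' : (1 : G ⧸ M) ≤ (QuotientGroup.mk g)⁻¹ := by
        rwa [← QuotientGroup.mk_inv]
      have h3 : (QuotientGroup.mk g : G ⧸ M) ≤ 1 := by
        have := hr 1 (QuotientGroup.mk g)⁻¹ (QuotientGroup.mk g) h2'
        rwa [mul_one, mul_inv_cancel] at this
      have : (QuotientGroup.mk g : G ⧸ M) = 1 := le_antisymm h3 h1
      exact (QuotientGroup.eq_one_iff g).1 this
    · intro hg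
      have h1 : (QuotientGroup.mk g : G ⧸ M) = 1 := (QuotientGroup.eq_one_iff g).2 hg
      have h2 : (QuotientGroup.mk g⁻¹ : G ⧸ M) = 1 := by
        rw [QuotientGroup.mk_inv, h1, inv_one]
      constructor
      · show (1 : G ⧸ M) ≤ QuotientGroup.mk g
        rw [h1]
      · show (1 : G ⧸ M) ≤ QuotientGroup.mk g⁻¹
        rw [h2]

lemma exists_cone {G : Type*} [Group G] (A B : Subsemigroup G)
    (hA : (A : Set G) ≠ Set.univ) (hB : (B : Set G) ≠ Set.univ)
    (hunion : (A : Set G) ∪ (B : Set G) = Set.univ) :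
    ∃ P : Set G, (∀ a ∈ P, ∀ b ∈ P, a * b ∈ P) ∧ (∀ g : G, g ∈ P ∨ g⁻¹ ∈ P) ∧
      P ≠ Set.univ := by
  have hG : ∀ g : G, g ∈ A ∨ g ∈ B := by
    intro g
    have : g ∈ (A : Set G) ∪ (B : Set G) := hunion ▸ Set.mem_univ g
    exact this
  by_cases hc : ∀ g : G, g ∈ A ∨ g⁻¹ ∈ A
  · exact ⟨A, fun a ha b hb => A.mul_mem ha hb, hc, hA⟩
  · push_neg at hc
    obtain ⟨g, hg1, hg2⟩ := hc
    have hgB : g ∈ B := (hG g).resolve_left hg1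
    have hginvB : g⁻¹ ∈ B := (hG g⁻¹).resolve_left hg2
    refine ⟨B, fun a ha b hb => B.mul_mem ha hb, ?_, hB⟩
    intro h
    by_contra hcon
    push_neg at hcon
    obtain ⟨hh1, hh2⟩ := hcon
    have hhA : h ∈ A := (hG h).resolve_right hh1
    have hhinvA : h⁻¹ ∈ A := (hG h⁻¹).resolve_right hh2
    rcases hG (g * h) with hgh | hgh
    · have : g ∈ A := by
        have := A.mul_mem hgh hhinvA
        rwa [mul_assoc, mul_inv_cancel, mul_one] at this
      exact hg1 this
    · have : h ∈ B := by
        have := B.mul_mem hginvB hgh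
        rwa [← mul_assoc, inv_mul_cancel, one_mul] at this
      exact hh1 this

/-- If a group `G` is the union of two proper subsemigroups, then there
is a minimum normal subgroup `N` of `G` such that `G/N` is nontrivial and left-orderable:
`G/N` is nontrivial and left-orderable, and every normal subgroup `M` with `G/M` nontrivial
and left-orderable contains `N`. -/
theorem exists_minimum_normal_with_leftOrderable_quotient {G : Type*} [Group G]
    (A B : Subsemigroup G) (hA : (A : Set G) ≠ Set.univ) (hB : (B : Set G) ≠ Set.univ)
    (hunion : (A : Set G) ∪ (B : Set G) = Set.univ) :
    ∃ (N : Subgroup G) (hN : N.Normal),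
      (Nontrivial (G ⧸ N) ∧
        @IsLeftOrderable (G ⧸ N) (@QuotientGroup.Quotient.group G _ N hN)) ∧
      ∀ (M : Subgroup G) (hM : M.Normal),
        Nontrivial (G ⧸ M) →
        @IsLeftOrderable (G ⧸ M) (@QuotientGroup.Quotient.group G _ M hM) →
        N ≤ M := by
  classical
  obtain ⟨P₀, hP₀mul, hP₀tot, hP₀ne⟩ := exists_cone A B hA hB hunion
  obtain ⟨g₀, hg₀⟩ : ∃ g : G, g ∉ P₀ := by
    by_contra h
    push_neg at h
    exact hP₀ne (Set.eq_univ_iff_forall.mpr h)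
  -- the family of conjugated cones
  set Pc : G → Set G := fun x => {g : G | x⁻¹ * g * x ∈ P₀} with hPc
  have hmulc : ∀ x : G, ∀ a ∈ Pc x, ∀ b ∈ Pc x, a * b ∈ Pc x := by
    intro x a ha b hb
    show x⁻¹ * (a * b) * x ∈ P₀
    have key : x⁻¹ * (a * b) * x = (x⁻¹ * a * x) * (x⁻¹ * b * x) := by group
    rw [key]
    exact hP₀mul _ ha _ hb
  have htotc : ∀ x : G, ∀ g : G, g ∈ Pc x ∨ g⁻¹ ∈ Pc x := by
    intro x g
    rcases hP₀tot (x⁻¹ * g * x) with h | h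
    · exact Or.inl h
    · right
      show x⁻¹ * g⁻¹ * x ∈ P₀
      have key : (x⁻¹ * g * x)⁻¹ = x⁻¹ * g⁻¹ * x := by group
      rwa [key] at h
  obtain ⟨D₁, hD₁mul, hD₁tot, hD₁ker⟩ := lemB Pc hmulc htotc
  have h1D₁ : (1 : G) ∈ D₁ := by
    rcases hD₁tot 1 with h | h
    · exact h
    · simpa using h
  set K₁ : Subgroup G :=
    { carrier := {g : G | g ∈ D₁ ∧ g⁻¹ ∈ D₁}
      one_mem' := ⟨h1D₁, by simpa using h1D₁⟩
      mul_mem' := fun {a b} ha hb =>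
        ⟨hD₁mul _ ha.1 _ hb.1, by
          rw [mul_inv_rev]
          exact hD₁mul _ hb.2 _ ha.2⟩
      inv_mem' := fun {a} ha => ⟨ha.2, by
        rw [inv_inv]
        exact ha.1⟩ } with hK₁
  have hK₁mem : ∀ g : G, g ∈ K₁ ↔ (g ∈ D₁ ∧ g⁻¹ ∈ D₁) := fun g => Iff.rfl
  have hK₁n : K₁.Normal := by
    constructor
    intro n hn c
    have hn' := (hD₁ker n).1 ((hK₁mem n).1 hn)
    refine (hK₁mem _).2 ((hD₁ker _).2 ?_)
    intro x
    have h1 := hn' (c⁻¹ * x)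
    constructor
    · show x⁻¹ * (c * n * c⁻¹) * x ∈ P₀
      have key : x⁻¹ * (c * n * c⁻¹) * x = (c⁻¹ * x)⁻¹ * n * (c⁻¹ * x) := by group
      rw [key]
      exact h1.1
    · show x⁻¹ * (c * n * c⁻¹)⁻¹ * x ∈ P₀
      have key : x⁻¹ * (c * n * c⁻¹)⁻¹ * x = (c⁻¹ * x)⁻¹ * n⁻¹ * (c⁻¹ * x) := by group
      rw [key]
      exact h1.2
  have hK₁t : K₁ ≠ ⊤ := by
    intro h
    have hmem : g₀ ∈ K₁ := h ▸ Subgroup.mem_top g₀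
    have h2 := (hD₁ker g₀).1 ((hK₁mem g₀).1 hmem) 1
    have h3 : (1 : G)⁻¹ * g₀ * 1 ∈ P₀ := h2.1
    rw [inv_one, one_mul, mul_one] at h3
    exact hg₀ h3
  obtain ⟨hnt₁, hlo₁⟩ := lemA D₁ hD₁mul hD₁tot K₁ hK₁mem hK₁n hK₁t
  -- the family of all good normal subgroups
  set S : Set (Subgroup G) := {M | ∃ hM : M.Normal, Nontrivial (G ⧸ M) ∧
      @IsLeftOrderable (G ⧸ M) (@QuotientGroup.Quotient.group G _ M hM)} with hS
  have hK₁S : K₁ ∈ S := ⟨hK₁n, hnt₁, hlo₁⟩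
  have hcone : ∀ M : S, ∃ P : Set G, (∀ a ∈ P, ∀ b ∈ P, a * b ∈ P) ∧
      (∀ g : G, g ∈ P ∨ g⁻¹ ∈ P) ∧ (∀ g : G, (g ∈ P ∧ g⁻¹ ∈ P) ↔ g ∈ M.1) := by
    rintro ⟨M, hM⟩
    obtain ⟨hMn, hMnt, hMlo⟩ := hM
    exact cone_of_LO M hMn hMlo
  choose Pc₂ h2mul h2tot h2ker using hcone
  obtain ⟨D₂, hD₂mul, hD₂tot, hD₂ker⟩ := lemB Pc₂ h2mul h2tot
  set N : Subgroup G := sInf S with hN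
  have hNmem : ∀ g : G, g ∈ N ↔ (g ∈ D₂ ∧ g⁻¹ ∈ D₂) := by
    intro g
    rw [hD₂ker g, hN, Subgroup.mem_sInf]
    constructor
    · intro h i
      exact (h2ker i g).2 (h i.1 i.2)
    · intro h p hp
      exact (h2ker ⟨p, hp⟩ g).1 (h ⟨p, hp⟩)
  have hNn : N.Normal := by
    constructor
    intro n hn c
    rw [hN, Subgroup.mem_sInf] at hn ⊢
    intro p hp
    have hpn : p.Normal := by
      obtain ⟨h1, -⟩ := hp
      exact h1
    exact hpn.conj_mem n (hn p hp) c
  have hNt : N ≠ ⊤ := by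
    intro h
    apply hK₁t
    have hle : N ≤ K₁ := sInf_le hK₁S
    rw [h] at hle
    exact top_le_iff.1 hle
  obtain ⟨hnt, hlo⟩ := lemA D₂ hD₂mul hD₂tot N hNmem hNn hNt
  refine ⟨N, hNn, ⟨hnt, hlo⟩, ?_⟩
  intro M hM h1 h2
  have hMS : M ∈ S := ⟨hM, h1, h2⟩
  exact sInf_le hMS
end
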